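/- arXiv:2203.05883 — 5 statements merged into one kernel-verified Lean document; each statement's English description precedes it below -/
import Mathlib

section
/- The virtual S_7-representation with symmetric-function character 2 s_{(7)} + s_{(4,3)} + 2 s_{(5,2)} + s_{(6,1)} + s_{(4,2,1)} is not a permutation representation of S_7. -/
open scoped Classical

/-- The class function on S₇ which is the character of the virtual representation
`2 s_{(7)} + s_{(4,3)} + 2 s_{(5,2)} + s_{(6,1)} + s_{(4,2,1)}`; its value at a
permutation depends only on the cycle type (here `Equiv.Perm.cycleType` records the
lengths of the nontrivial cycles).  The values were computed by the
Murnaghan–Nakayama rule. -/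
noncomputable def chiA2minusA1 (σ : Equiv.Perm (Fin 7)) : ℚ :=
  if σ.cycleType = 0 then 85
  else if σ.cycleType = {2} then 27
  else if σ.cycleType = {2, 2} then 9
  else if σ.cycleType = {2, 2, 2} then 7
  else if σ.cycleType = {3} then 7
  else if σ.cycleType = {3, 2} then 3
  else if σ.cycleType = {3, 2, 2} then 3
  else if σ.cycleType = {3, 3} then 1
  else if σ.cycleType = {4} then 1
  else if σ.cycleType = {4, 2} then 3
  else if σ.cycleType = {4, 3} then 1
  else if σ.cycleType = {5} then 0
  else if σ.cycleType = {5, 2} then 2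
  else if σ.cycleType = {6} then 1
  else if σ.cycleType = {7} then 1
  else 0

/-- An auxiliary permutation of cycle type `{5, 2}`. -/
noncomputable def sigma7 : Equiv.Perm (Fin 7) :=
  List.formPerm [0, 1, 2, 3, 4] * List.formPerm [5, 6]

lemma cycleType_formPerm' (l : List (Fin 7)) (hl : l.Nodup) (hn : 2 ≤ l.length) :
    (List.formPerm l).cycleType = {l.length} := by
  have hc := List.isCycle_formPerm hl hn
  rw [hc.cycleType, List.support_formPerm_of_nodup l hl
    (by intro x hx; subst hx; simp at hn), List.card_toFinset, List.dedup_eq_self.mpr hl]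

lemma hct : sigma7.cycleType = {5, 2} := by
  rw [sigma7, Equiv.Perm.Disjoint.cycleType_mul, cycleType_formPerm' _ (by decide) (by decide),
    cycleType_formPerm' _ (by decide) (by decide)]
  · rfl
  · rw [Equiv.Perm.disjoint_iff_eq_or_eq]; decide

lemma hsq : sigma7 * sigma7 = List.formPerm [0, 2, 4, 1, 3] := by
  rw [sigma7]; decide

lemma hct2 : (sigma7 * sigma7).cycleType = {5} := by
  rw [hsq, cycleType_formPerm' _ (by decide) (by decide)]; rfl

lemma chi_sigma7 : chiA2minusA1 sigma7 = 2 := by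
  unfold chiA2minusA1
  rw [hct, if_neg (by decide), if_neg (by decide), if_neg (by decide), if_neg (by decide),
    if_neg (by decide), if_neg (by decide), if_neg (by decide), if_neg (by decide),
    if_neg (by decide), if_neg (by decide), if_neg (by decide), if_neg (by decide),
    if_pos rfl]

lemma chi_sigma7_sq : chiA2minusA1 (sigma7 * sigma7) = 0 := by
  unfold chiA2minusA1
  rw [hct2, if_neg (by decide), if_neg (by decide), if_neg (by decide), if_neg (by decide),
    if_neg (by decide), if_neg (by decide), if_neg (by decide), if_neg (by decide),
    if_neg (by decide), if_neg (by decide), if_neg (by decide), if_pos rfl]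

/-- the virtual S₇-representation with symmetric-function character
`2 s_{(7)} + s_{(4,3)} + 2 s_{(5,2)} + s_{(6,1)} + s_{(4,2,1)}` is not a permutation
representation: there is no finite S₇-set whose permutation character (number of
fixed points) equals the character `chiA2minusA1` of this virtual representation. -/
theorem not_permutation_representation :
    ¬ ∃ (β : Type) (_ : Fintype β) (φ : Equiv.Perm (Fin 7) →* Equiv.Perm β),
        ∀ g : Equiv.Perm (Fin 7), (({b : β | φ g b = b} : Set β).ncard : ℚ) = chiA2minusA1 g := by
  rintro ⟨β, _, φ, h⟩
  have h1 : ({b : β | φ sigma7 b = b} : Set β).ncard = 2 := by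
    have := h sigma7
    rw [chi_sigma7] at this
    exact_mod_cast this
  have h2 : ({b : β | φ (sigma7 * sigma7) b = b} : Set β).ncard = 0 := by
    have := h (sigma7 * sigma7)
    rw [chi_sigma7_sq] at this
    exact_mod_cast this
  have hsub : ({b : β | φ sigma7 b = b} : Set β) ⊆ {b : β | φ (sigma7 * sigma7) b = b} := by
    intro b hb
    simp only [Set.mem_setOf_eq, map_mul, Equiv.Perm.mul_apply] at *
    rw [hb, hb]
  have := Set.ncard_le_ncard hsub (Set.toFinite _)
  omega
end

section
/- There is a canonical bijection between rooted trees with n inputs (satisfying val(v_0) ≥ 3 at the root and val(v) ≥ 4 at every other vertex) and sequences (P_2, P_3, …, P_{n−1}) of partitions of the set {1,…,n} such that P_2 = {{1},…,{n}} and for each 3 ≤ k ≤ n−1, either P_{k−1} = P_k or P_{k−1} is obtained from P_k by splitting some parts of P_k, where each split part of P_k has cardinality exactly k and is split into at least 3 pieces. -/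
/-! STATEMENT 10: canonical bijection between rooted trees with n (labeled) inputs
(`val(v₀) ≥ 3` at the root, `val(v) ≥ 4` elsewhere) and descending sequences
`(P₂, P₃, …, P_{n−1})` of partitions of `{1,…,n}` with `P₂` the discrete partition and,
for each `3 ≤ k ≤ n−1`, either `P_{k−1} = P_k` or `P_{k−1}` obtained from `P_k` by
splitting some parts, each split part having cardinality exactly `k` and being split
into at least 3 pieces.

A rooted tree with n inputs is encoded by the laminar family `F` of the sets
`D_T(v) ⊆ Fin n` of inputs lying below the non-root vertices `v`; each member of `F` has
≥ 3 elements, each non-root vertex has ≥ 3 children (`val ≥ 4`), and the root has ≥ 2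
children (`val(v₀) ≥ 3`).  A sequence of partitions is encoded as a function
`ℕ → Finpartition univ` constant below index 2 and above index `n − 1`. -/

open Finset

def childSets (n : ℕ) (F : Finset (Finset (Fin n))) (S : Finset (Fin n)) :
    Finset (Finset (Fin n)) :=
  F.filter fun T => T ⊂ S ∧ ∀ U ∈ F, ¬ (T ⊂ U ∧ U ⊂ S)

def freeIn (n : ℕ) (F : Finset (Finset (Fin n))) (S : Finset (Fin n)) : Finset (Fin n) :=
  S.filter fun x => ∀ T ∈ F, T ⊂ S → x ∉ T

def childCount (n : ℕ) (F : Finset (Finset (Fin n))) (S : Finset (Fin n)) : ℕ :=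
  (childSets n F S).card + (freeIn n F S).card

def rootChildSets (n : ℕ) (F : Finset (Finset (Fin n))) : Finset (Finset (Fin n)) :=
  F.filter fun T => ∀ U ∈ F, ¬ T ⊂ U

def rootFree (n : ℕ) (F : Finset (Finset (Fin n))) : Finset (Fin n) :=
  Finset.univ.filter fun x => ∀ T ∈ F, x ∉ T

def rootChildCount (n : ℕ) (F : Finset (Finset (Fin n))) : ℕ :=
  (rootChildSets n F).card + (rootFree n F).card

/-- `F` encodes a rooted tree with `n` inputs, with `val(v₀) ≥ 3` and `val(v) ≥ 4` for
`v ≠ v₀`. -/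
def IsTreeFam (n : ℕ) (F : Finset (Finset (Fin n))) : Prop :=
  (∀ S ∈ F, ∀ T ∈ F, S ⊆ T ∨ T ⊆ S ∨ Disjoint S T) ∧
  (∀ S ∈ F, 3 ≤ S.card) ∧
  (∀ S ∈ F, 3 ≤ childCount n F S) ∧
  2 ≤ rootChildCount n F

/-- The rooted trees with `n` inputs. -/
def NRootedTree (n : ℕ) := {F : Finset (Finset (Fin n)) // IsTreeFam n F}

/-- `Q ≥ₖ P`: either `Q = P`, or `Q` is obtained from `P` by splitting some parts of
`P`, where each split part of `P` has cardinality exactly `k` and is split into at least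
3 pieces.  (`Q` refines `P`, and each part of `P` is either a part of `Q` or has
cardinality `k` and contains at least 3 parts of `Q`.) -/
def StepRel (n k : ℕ) (Q P : Finpartition (Finset.univ : Finset (Fin n))) : Prop :=
  (∀ S ∈ Q.parts, ∃ T ∈ P.parts, S ⊆ T) ∧
  ∀ T ∈ P.parts,
    (Q.parts.filter (· ⊆ T) = {T}) ∨ (T.card = k ∧ 3 ≤ (Q.parts.filter (· ⊆ T)).card)

/-- Descending sequences `(P₂, …, P_{n−1})` of partitions of `{1,…,n}`, starting at the
discrete partition, with `P_{k−1} ≥ₖ P_k` at each step; the function is padded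
constantly outside the index range `[2, n−1]`. -/
def PartitionChain (n : ℕ) :=
  {P : ℕ → Finpartition (Finset.univ : Finset (Fin n)) //
    (∀ S ∈ (P 2).parts, S.card = 1) ∧
    (∀ k, 3 ≤ k → k ≤ n - 1 → StepRel n k (P (k - 1)) (P k)) ∧
    (∀ k, k ≤ 2 → P k = P 2) ∧
    (∀ k, n - 1 ≤ k → P k = P (n - 1))}

/-! A tree, encoded by its laminar family `F` of vertex sets `D_T(v)`, gives at each level `k`
the partition `P_k` of the inputs into the maximal members of `F` of cardinality at most `k`
and singletons. Passing from `P_{k-1}` to `P_k` merges exactly the children of the vertices `v`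
with `d_T(v) = k`, and `val(v) ≥ 4` says there are at least three of them. Conversely, the tree
is recovered from the chain as the family of the non-singleton parts `S` of `P_{|S|}`, and
`val(v₀) ≥ 3` says that `P_{n-1}` has at least two parts. -/

namespace Finpartition

variable {α : Type*} [DecidableEq α] {s T : Finset α}

lemma filter_subset_eq_singleton (P : Finpartition s) (hT : T ∈ P.parts) :
    P.parts.filter (· ⊆ T) = {T} := by
  refine eq_singleton_iff_unique_mem.2 ⟨mem_filter.2 ⟨hT, subset_rfl⟩, fun S hS => ?_⟩
  obtain ⟨hSP, hST⟩ := mem_filter.1 hS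
  obtain ⟨x, hx⟩ := P.nonempty_of_mem_parts hSP
  exact P.eq_of_mem_parts hSP hT hx (hST hx)

lemma eq_of_parts_subset {P Q : Finpartition s} (h : P.parts ⊆ Q.parts) : P = Q := by
  ext T
  refine ⟨fun hT => h hT, fun hT => ?_⟩
  obtain ⟨x, hx⟩ := Q.nonempty_of_mem_parts hT
  obtain ⟨U, hU, hxU⟩ := P.exists_mem (Q.subset hT hx)
  rwa [Q.eq_of_mem_parts hT (h hU) hx hxU]

lemma one_lt_card_parts (P : Finpartition s) (hs : s.Nonempty) (h : s ∉ P.parts) :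
    1 < #P.parts := by
  obtain ⟨x, hx⟩ := hs
  obtain ⟨T, hT, hxT⟩ := P.exists_mem hx
  obtain ⟨y, hys, hyT⟩ := exists_of_ssubset (ssubset_of_subset_of_ne (P.subset hT)
    fun h' => h (h' ▸ hT))
  obtain ⟨U, hU, hyU⟩ := P.exists_mem hys
  exact one_lt_card.2 ⟨T, hT, U, hU, fun hTU => hyT (hTU ▸ hyU)⟩

end Finpartition

section Laminar

variable {α : Type*} {F G : Finset (Finset α)} {S T : Finset α} {x : α}

def IsLaminar (F : Finset (Finset α)) : Prop :=
  ∀ S ∈ F, ∀ T ∈ F, S ⊆ T ∨ T ⊆ S ∨ Disjoint S T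

lemma IsLaminar.subset (hF : IsLaminar F) (hGF : G ⊆ F) : IsLaminar G :=
  fun S hS T hT => hF S (hGF hS) T (hGF hT)

lemma IsLaminar.ssubset_of_card_lt (hF : IsLaminar F) (hT : T ∈ F) (hS : S ∈ F)
    (hcard : T.card < S.card) (hxT : x ∈ T) (hxS : x ∈ S) : T ⊂ S := by
  rcases hF T hT S hS with h | h | h
  · exact ssubset_of_subset_of_ne h (by rintro rfl; omega)
  · exact absurd (card_le_card h) (by omega)
  · exact absurd hxS (disjoint_left.1 h hxT)

variable [DecidableEq α]

def maximalMembers (F : Finset (Finset α)) : Finset (Finset α) :=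
  F.filter fun S => ∀ T ∈ F, ¬ S ⊂ T

lemma mem_maximalMembers : S ∈ maximalMembers F ↔ S ∈ F ∧ ∀ T ∈ F, ¬ S ⊂ T :=
  mem_filter

lemma exists_mem_maximalMembers_superset (hS : S ∈ F) : ∃ T ∈ maximalMembers F, S ⊆ T := by
  obtain ⟨T, hST, hT⟩ := F.exists_le_maximal hS
  exact ⟨T, mem_maximalMembers.2 ⟨hT.1, fun U hU hTU => hTU.2 (hT.2 hU hTU.1)⟩, hST⟩

lemma card_union_image_singleton {A : Finset (Finset α)} {B : Finset α}
    (hA : ∀ T ∈ A, 2 ≤ T.card) : #(A ∪ B.image singleton) = #A + #B := by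
  rw [card_union_of_disjoint, card_image_of_injective _ singleton_injective]
  refine disjoint_left.2 fun T hTA hTB => ?_
  obtain ⟨x, -, rfl⟩ := mem_image.1 hTB
  simpa using hA _ hTA

variable [Fintype α]

def uncoveredPoints (F : Finset (Finset α)) : Finset α :=
  univ.filter fun x => ∀ T ∈ F, x ∉ T

lemma mem_uncoveredPoints : x ∈ uncoveredPoints F ↔ ∀ T ∈ F, x ∉ T := by
  simp [uncoveredPoints]

def topParts (F : Finset (Finset α)) : Finset (Finset α) :=
  maximalMembers F ∪ (uncoveredPoints F).image singleton

lemma mem_topParts :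
    S ∈ topParts F ↔ S ∈ maximalMembers F ∨ ∃ x ∈ uncoveredPoints F, {x} = S := by
  rw [topParts, mem_union, mem_image]

lemma exists_mem_topParts (F : Finset (Finset α)) (x : α) : ∃ T ∈ topParts F, x ∈ T := by
  by_cases hx : x ∈ uncoveredPoints F
  · exact ⟨{x}, mem_topParts.2 (Or.inr ⟨x, hx, rfl⟩), mem_singleton_self x⟩
  · obtain ⟨S, hS, hxS⟩ : ∃ S ∈ F, x ∈ S := by simpa [mem_uncoveredPoints] using hx
    obtain ⟨T, hT, hST⟩ := exists_mem_maximalMembers_superset hS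
    exact ⟨T, mem_topParts.2 (Or.inl hT), hST hxS⟩

lemma exists_mem_topParts_superset (hGF : G ⊆ F) (hS : S ∈ topParts G) :
    ∃ T ∈ topParts F, S ⊆ T := by
  rcases mem_topParts.1 hS with hS | ⟨x, -, rfl⟩
  · obtain ⟨T, hT, hST⟩ :=
      exists_mem_maximalMembers_superset (hGF (mem_maximalMembers.1 hS).1)
    exact ⟨T, mem_topParts.2 (Or.inl hT), hST⟩
  · obtain ⟨T, hT, hxT⟩ := exists_mem_topParts F x
    exact ⟨T, hT, singleton_subset_iff.2 hxT⟩

lemma mem_topParts_of_subset (hGF : G ⊆ F) (hS : S ∈ topParts F) (hSG : S ∈ F → S ∈ G) :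
    S ∈ topParts G := by
  rw [mem_topParts] at hS ⊢
  rcases hS with hS | ⟨x, hx, rfl⟩
  · obtain ⟨hSF, hmax⟩ := mem_maximalMembers.1 hS
    exact Or.inl (mem_maximalMembers.2 ⟨hSG hSF, fun T hT => hmax T (hGF hT)⟩)
  · exact Or.inr
      ⟨x, mem_uncoveredPoints.2 fun T hT => mem_uncoveredPoints.1 hx T (hGF hT), rfl⟩

lemma card_le_of_mem_topParts_filter {k : ℕ} (hk : 1 ≤ k)
    (hS : S ∈ topParts (F.filter (·.card ≤ k))) : S.card ≤ k := by
  rcases mem_topParts.1 hS with hS | ⟨x, -, rfl⟩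
  · exact (mem_filter.1 (mem_maximalMembers.1 hS).1).2
  · simpa using hk

lemma card_topParts (hF : ∀ T ∈ F, 2 ≤ T.card) :
    #(topParts F) = #(maximalMembers F) + #(uncoveredPoints F) :=
  card_union_image_singleton fun T hT => hF T (mem_maximalMembers.1 hT).1

lemma IsLaminar.pairwiseDisjoint_topParts (hF : IsLaminar F) :
    (topParts F : Set (Finset α)).PairwiseDisjoint id := by
  intro S hS T hT hne
  rw [mem_coe, mem_topParts] at hS hT
  rcases hS with hS | ⟨x, hx, rfl⟩ <;> rcases hT with hT | ⟨y, hy, rfl⟩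
  · obtain ⟨hSF, hSmax⟩ := mem_maximalMembers.1 hS
    obtain ⟨hTF, hTmax⟩ := mem_maximalMembers.1 hT
    rcases hF S hSF T hTF with h | h | h
    · exact absurd (ssubset_of_subset_of_ne h hne) (hSmax T hTF)
    · exact absurd (ssubset_of_subset_of_ne h hne.symm) (hTmax S hSF)
    · exact h
  · exact disjoint_singleton_right.2 (mem_uncoveredPoints.1 hy S (mem_maximalMembers.1 hS).1)
  · exact disjoint_singleton_left.2 (mem_uncoveredPoints.1 hx T (mem_maximalMembers.1 hT).1)
  · exact disjoint_singleton.2 fun h => hne (h ▸ rfl)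

def IsLaminar.topPartition (hF : IsLaminar F) (hF₀ : ∅ ∉ F) :
    Finpartition (univ : Finset α) where
  parts := topParts F
  supIndep := supIndep_iff_pairwiseDisjoint.2 hF.pairwiseDisjoint_topParts
  sup_parts := eq_univ_of_forall fun x => by
    obtain ⟨T, hT, hxT⟩ := exists_mem_topParts F x
    exact mem_sup.2 ⟨T, hT, hxT⟩
  bot_notMem := by
    rw [bot_eq_empty, mem_topParts]
    rintro (h | ⟨x, -, h⟩)
    exacts [hF₀ (mem_maximalMembers.1 h).1, singleton_ne_empty x h]

def IsLaminar.levelPartition (hF : IsLaminar F) (hF₀ : ∅ ∉ F) (k : ℕ) :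
    Finpartition (univ : Finset α) :=
  (hF.subset (filter_subset (·.card ≤ k) F)).topPartition fun h => hF₀ (mem_filter.1 h).1

@[simp] lemma IsLaminar.levelPartition_parts (hF : IsLaminar F) (hF₀ : ∅ ∉ F) (k : ℕ) :
    (hF.levelPartition hF₀ k).parts = topParts (F.filter (·.card ≤ k)) := rfl

lemma IsLaminar.levelPartition_congr (hF : IsLaminar F) (hF₀ : ∅ ∉ F) {j k : ℕ}
    (h : ∀ S ∈ F, S.card ≤ j ↔ S.card ≤ k) :
    hF.levelPartition hF₀ j = hF.levelPartition hF₀ k :=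
  Finpartition.ext (by simp only [levelPartition_parts, filter_congr h])

end Laminar

lemma StepRel.refl {n : ℕ} (k : ℕ) (P : Finpartition (univ : Finset (Fin n))) :
    StepRel n k P P :=
  ⟨fun S hS => ⟨S, hS, subset_rfl⟩, fun _ hT => Or.inl (P.filter_subset_eq_singleton hT)⟩

lemma StepRel.mem_or_card_eq {n k : ℕ} {Q P : Finpartition (univ : Finset (Fin n))}
    (h : StepRel n k Q P) {T : Finset (Fin n)} (hT : T ∈ P.parts) :
    T ∈ Q.parts ∨ (T.card = k ∧ 3 ≤ #(Q.parts.filter (· ⊆ T))) :=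
  (h.2 T hT).imp (fun h' => (mem_filter.1 (h' ▸ mem_singleton_self T)).1) id

section Tree

variable {n k : ℕ} {F : Finset (Finset (Fin n))} {S : Finset (Fin n)}

lemma childSets_eq (hF : IsLaminar F) (hF₀ : ∅ ∉ F) (hS : S ∈ F) :
    childSets n F S = (maximalMembers (F.filter (·.card ≤ S.card - 1))).filter (· ⊆ S) := by
  have hne : ∀ T ∈ F, T.Nonempty :=
    fun T hT => nonempty_iff_ne_empty.2 fun h => hF₀ (h ▸ hT)
  ext T
  simp only [childSets, mem_filter, mem_maximalMembers, and_imp]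
  constructor
  · rintro ⟨hT, hTS, hmid⟩
    have hTS' := card_lt_card hTS
    refine ⟨⟨⟨hT, by omega⟩, fun U hU hUk hTU => hmid U hU ⟨hTU, ?_⟩⟩, hTS.1⟩
    obtain ⟨x, hx⟩ := hne T hT
    exact hF.ssubset_of_card_lt hU hS (by omega) (hTU.1 hx) (hTS.1 hx)
  · rintro ⟨⟨⟨hT, hTk⟩, hmax⟩, hTS⟩
    have := card_pos.2 (hne T hT)
    refine ⟨hT, ssubset_of_subset_of_ne hTS (by rintro rfl; omega),
      fun U hU ⟨hTU, hUS⟩ => hmax U hU (by have := card_lt_card hUS; omega) hTU⟩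

lemma freeIn_eq (hF : IsLaminar F) (hS : S ∈ F) :
    freeIn n F S = (uncoveredPoints (F.filter (·.card ≤ S.card - 1))).filter (· ∈ S) := by
  ext x
  simp only [freeIn, mem_filter, mem_uncoveredPoints, and_imp]
  constructor
  · rintro ⟨hxS, hfree⟩
    refine ⟨fun T hT hTk hxT => hfree T hT ?_ hxT, hxS⟩
    exact hF.ssubset_of_card_lt hT hS (by have := card_pos.2 ⟨x, hxT⟩; omega) hxT hxS
  · rintro ⟨hfree, hxS⟩
    exact ⟨hxS, fun T hT hTS => hfree T hT (by have := card_lt_card hTS; omega)⟩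

/-- The children of the vertex `S` are the parts of `P_{|S|-1}` inside `S`. -/
lemma childCount_eq (hF : IsLaminar F) (hF₂ : ∀ T ∈ F, 2 ≤ T.card) (hS : S ∈ F) :
    childCount n F S = #((topParts (F.filter (·.card ≤ S.card - 1))).filter (· ⊆ S)) := by
  have hF₀ : ∅ ∉ F := fun h => by simpa using hF₂ ∅ h
  rw [childCount, childSets_eq hF hF₀ hS, freeIn_eq hF hS, ← card_union_image_singleton
    fun T hT => hF₂ T (mem_filter.1 (mem_maximalMembers.1 (mem_filter.1 hT).1).1).1,
    topParts, filter_union, filter_image]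
  simp only [singleton_subset_iff]

lemma rootChildCount_eq (hF₂ : ∀ T ∈ F, 2 ≤ T.card) :
    rootChildCount n F = #(topParts F) := by
  rw [card_topParts hF₂, rootChildCount, rootChildSets, rootFree, maximalMembers,
    uncoveredPoints]
  congr -- the filters agree up to their decidability instances

lemma IsTreeFam.isLaminar (hF : IsTreeFam n F) : IsLaminar F := hF.1

lemma IsTreeFam.two_le_card (hF : IsTreeFam n F) : ∀ S ∈ F, 2 ≤ S.card :=
  fun S hS => (hF.2.1 S hS).trans' (by norm_num)

lemma IsTreeFam.empty_notMem (hF : IsTreeFam n F) : ∅ ∉ F :=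
  fun h => by simpa using hF.2.1 ∅ h

lemma IsTreeFam.univ_notMem (hF : IsTreeFam n F) : univ ∉ F := by
  -- otherwise `univ` would be the only child of the root
  intro hu
  have hsub : topParts F ⊆ {univ} := fun T hT => by
    rcases mem_topParts.1 hT with hT | ⟨x, hx, rfl⟩
    · exact mem_singleton.2 (by_contra fun hne =>
        (mem_maximalMembers.1 hT).2 univ hu (ssubset_univ_iff.2 hne))
    · exact absurd (mem_univ x) (mem_uncoveredPoints.1 hx univ hu)
  have := hF.2.2.2
  rw [rootChildCount_eq hF.two_le_card] at this
  have := card_le_card hsub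
  rw [card_singleton] at this
  omega

lemma IsTreeFam.card_le (hF : IsTreeFam n F) (hS : S ∈ F) : S.card ≤ n - 1 := by
  have := card_le_univ S
  rw [Fintype.card_fin] at this
  by_contra h
  exact hF.univ_notMem (eq_univ_of_card S (by rw [Fintype.card_fin]; omega) ▸ hS)

def IsTreeFam.levelPartition (hF : IsTreeFam n F) (k : ℕ) :
    Finpartition (univ : Finset (Fin n)) :=
  hF.isLaminar.levelPartition hF.empty_notMem k

lemma IsTreeFam.card_eq_one_of_mem_levelPartition_two (hF : IsTreeFam n F)
    (hS : S ∈ (hF.levelPartition 2).parts) : S.card = 1 := by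
  rcases mem_topParts.1 hS with hS | ⟨x, -, rfl⟩
  · obtain ⟨hSF, hS2⟩ := mem_filter.1 (mem_maximalMembers.1 hS).1
    have := hF.2.1 S hSF
    omega
  · exact card_singleton x

lemma IsTreeFam.levelPartition_of_le_two (hF : IsTreeFam n F) (hk : k ≤ 2) :
    hF.levelPartition k = hF.levelPartition 2 :=
  hF.isLaminar.levelPartition_congr _ fun S hS => by have := hF.2.1 S hS; omega

lemma IsTreeFam.levelPartition_of_le (hF : IsTreeFam n F) (hk : n - 1 ≤ k) :
    hF.levelPartition k = hF.levelPartition (n - 1) :=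
  hF.isLaminar.levelPartition_congr _ fun S hS => by have := hF.card_le hS; omega

lemma IsTreeFam.stepRel (hF : IsTreeFam n F) (hk : 2 ≤ k) :
    StepRel n k (hF.levelPartition (k - 1)) (hF.levelPartition k) := by
  have hmono : F.filter (·.card ≤ k - 1) ⊆ F.filter (·.card ≤ k) :=
    fun T hT => mem_filter.2 ⟨(mem_filter.1 hT).1, (mem_filter.1 hT).2.trans (Nat.sub_le k 1)⟩
  refine ⟨fun S hS => exists_mem_topParts_superset hmono hS, fun T hT => ?_⟩
  by_cases hTk : T.card ≤ k - 1
  · refine Or.inl ((hF.levelPartition (k - 1)).filter_subset_eq_singleton ?_)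
    exact mem_topParts_of_subset hmono hT fun h => mem_filter.2 ⟨(mem_filter.1 h).1, hTk⟩
  have hcard : T.card = k := by
    have := card_le_of_mem_topParts_filter (by omega) hT
    omega
  have hTF : T ∈ F := by
    rcases mem_topParts.1 hT with hT | ⟨x, -, rfl⟩
    · exact (mem_filter.1 (mem_maximalMembers.1 hT).1).1
    · rw [card_singleton] at hcard
      omega
  refine Or.inr ⟨hcard, ?_⟩
  calc 3 ≤ childCount n F T := hF.2.2.1 T hTF
    _ = _ := by rw [childCount_eq hF.isLaminar hF.two_le_card hTF, hcard]; rfl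

end Tree

namespace PartitionChain

variable {n : ℕ} (P : PartitionChain n) {S U : Finset (Fin n)} {j k : ℕ}

lemma stepRel_succ (k : ℕ) : StepRel n (k + 1) (P.1 k) (P.1 (k + 1)) := by
  obtain ⟨-, hstep, hlow, hhigh⟩ := P.2
  rcases le_or_gt (k + 1) 2 with hk | hk
  · rw [hlow (k + 1) hk, hlow k (by omega)]
    exact StepRel.refl _ _
  rcases le_or_gt (k + 1) (n - 1) with hkn | hkn
  · simpa using hstep (k + 1) hk hkn
  · rw [hhigh (k + 1) (by omega), hhigh k (by omega)]
    exact StepRel.refl _ _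

lemma monotone : Monotone P.1 :=
  monotone_nat_of_le_succ fun k => (P.stepRel_succ k).1

lemma card_eq_one_of_le_two (hk : k ≤ 2) (hS : S ∈ (P.1 k).parts) : S.card = 1 :=
  P.2.1 S (P.2.2.2.1 k hk ▸ hS)

lemma card_le (hk : 1 ≤ k) (hS : S ∈ (P.1 k).parts) : S.card ≤ k := by
  induction k, hk using Nat.le_induction generalizing S with
  | base => exact (P.card_eq_one_of_le_two (by norm_num) hS).le
  | succ k _ ih =>
    rcases (P.stepRel_succ k).mem_or_card_eq hS with h | ⟨h, -⟩
    exacts [(ih h).trans k.le_succ, h.le]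

lemma mem_of_card_le (hS : S ∈ (P.1 k).parts) (hSj : S.card ≤ j) (hjk : j ≤ k) :
    S ∈ (P.1 j).parts := by
  induction k, hjk using Nat.le_induction generalizing S with
  | base => exact hS
  | succ k hjk ih =>
    rcases (P.stepRel_succ k).mem_or_card_eq hS with h | ⟨h, -⟩
    · exact ih h hSj
    · omega

/-- The vertex sets of the tree: a part `S` of some `P_k` with `|S| ≥ 2` first appears in
`P_{|S|}`. -/
def family : Finset (Finset (Fin n)) :=
  univ.filter fun S => 2 ≤ S.card ∧ S ∈ (P.1 S.card).parts

lemma mem_family : S ∈ P.family ↔ 2 ≤ S.card ∧ S ∈ (P.1 S.card).parts := by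
  simp [family]

lemma two_le_card : ∀ S ∈ P.family, 2 ≤ S.card :=
  fun _ hS => (P.mem_family.1 hS).1

lemma three_le_card : ∀ S ∈ P.family, 3 ≤ S.card := by
  intro S hS
  obtain ⟨h2, hS⟩ := P.mem_family.1 hS
  by_contra h
  have := P.card_eq_one_of_le_two (by omega) hS
  omega

lemma empty_notMem_family : ∅ ∉ P.family :=
  fun h => by simpa using P.two_le_card ∅ h

lemma mem_family_of_mem_parts (hS : S ∈ (P.1 k).parts) (h2 : 2 ≤ S.card) :
    S ∈ P.family ∧ S.card ≤ k := by
  rcases Nat.eq_zero_or_pos k with rfl | hk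
  · have := P.card_eq_one_of_le_two (by norm_num) hS
    omega
  · have hSk := P.card_le hk hS
    exact ⟨P.mem_family.2 ⟨h2, P.mem_of_card_le hS le_rfl hSk⟩, hSk⟩

lemma subset_of_mem_family {x : Fin n} (hU : U ∈ P.family) (hUk : U.card ≤ k)
    (hS : S ∈ (P.1 k).parts) (hxU : x ∈ U) (hxS : x ∈ S) : U ⊆ S := by
  obtain ⟨W, hW, hUW⟩ := P.monotone hUk (P.mem_family.1 hU).2
  rwa [(P.1 k).eq_of_mem_parts hW hS (hUW hxU) hxS] at hUW

lemma isLaminar_family : IsLaminar P.family := by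
  intro S hS T hT
  rcases disjoint_or_nonempty_inter S T with h | ⟨x, hx⟩
  · exact Or.inr (Or.inr h)
  rw [mem_inter] at hx
  rcases le_total S.card T.card with h | h
  · exact Or.inl (P.subset_of_mem_family hS h (P.mem_family.1 hT).2 hx.1 hx.2)
  · exact Or.inr (Or.inl (P.subset_of_mem_family hT h (P.mem_family.1 hS).2 hx.2 hx.1))

lemma levelPartition_family (k : ℕ) :
    P.isLaminar_family.levelPartition P.empty_notMem_family k = P.1 k := by
  refine (Finpartition.eq_of_parts_subset fun S hS => ?_).symm
  rw [IsLaminar.levelPartition_parts, mem_topParts]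
  obtain ⟨x, hxS⟩ := (P.1 k).nonempty_of_mem_parts hS
  rcases lt_or_ge S.card 2 with h1 | h2
  · have hSx : S = {x} :=
      eq_singleton_iff_unique_mem.2 ⟨hxS, fun y hy => card_le_one.1 (by omega) y hy x hxS⟩
    refine Or.inr ⟨x, mem_uncoveredPoints.2 fun U hU hxU => ?_, hSx.symm⟩
    obtain ⟨hUfam, hUk⟩ := mem_filter.1 hU
    have := card_le_card (P.subset_of_mem_family hUfam hUk hS hxU hxS)
    have := P.two_le_card U hUfam
    omega
  · obtain ⟨hSfam, hSk⟩ := P.mem_family_of_mem_parts hS h2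
    refine Or.inl (mem_maximalMembers.2 ⟨mem_filter.2 ⟨hSfam, hSk⟩, fun U hU hSU => ?_⟩)
    obtain ⟨hUfam, hUk⟩ := mem_filter.1 hU
    exact hSU.2 (P.subset_of_mem_family hUfam hUk hS (hSU.1 hxS) hxS)

lemma topParts_family (k : ℕ) : topParts (P.family.filter (·.card ≤ k)) = (P.1 k).parts :=
  congrArg Finpartition.parts (P.levelPartition_family k)

lemma three_le_childCount : ∀ S ∈ P.family, 3 ≤ childCount n P.family S := by
  intro S hS
  have h3 := P.three_le_card S hS
  have hstep := P.stepRel_succ (S.card - 1)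
  rw [Nat.sub_add_cancel (by omega)] at hstep
  rw [childCount_eq P.isLaminar_family P.two_le_card hS, P.topParts_family]
  rcases hstep.mem_or_card_eq (P.mem_family.1 hS).2 with h | ⟨-, h⟩
  · have := P.card_le (by omega) h
    omega
  · exact h

lemma two_le_rootChildCount (hn : 2 ≤ n) : 2 ≤ rootChildCount n P.family := by
  have hall : P.family.filter (·.card ≤ n) = P.family :=
    filter_true_of_mem fun S _ => by simpa using card_le_univ S
  rw [rootChildCount_eq P.two_le_card, ← hall, P.topParts_family n, P.2.2.2.2 n (by omega)]
  refine (P.1 (n - 1)).one_lt_card_parts ⟨⟨0, by omega⟩, mem_univ _⟩ fun h => ?_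
  have := P.card_le (by omega) h
  rw [card_univ, Fintype.card_fin] at this
  omega

def toTree (hn : 2 ≤ n) : NRootedTree n :=
  ⟨P.family, P.isLaminar_family, P.three_le_card, P.three_le_childCount,
    P.two_le_rootChildCount hn⟩

end PartitionChain

def NRootedTree.toChain {n : ℕ} (T : NRootedTree n) : PartitionChain n :=
  ⟨T.2.levelPartition, fun _ => T.2.card_eq_one_of_mem_levelPartition_two,
    fun _ hk _ => T.2.stepRel (by omega), fun _ => T.2.levelPartition_of_le_two,
    fun _ => T.2.levelPartition_of_le⟩

lemma NRootedTree.family_toChain {n : ℕ} (T : NRootedTree n) : T.toChain.family = T.1 := by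
  ext S
  rw [PartitionChain.mem_family]
  change 2 ≤ S.card ∧ S ∈ topParts (T.1.filter (·.card ≤ S.card)) ↔ S ∈ T.1
  rw [mem_topParts, mem_maximalMembers, mem_filter]
  constructor
  · rintro ⟨h2, ⟨⟨hS, -⟩, -⟩ | ⟨x, -, rfl⟩⟩
    · exact hS
    · simp at h2
  · intro hS
    refine ⟨T.2.two_le_card S hS, Or.inl ⟨⟨hS, le_rfl⟩, fun U hU hSU => ?_⟩⟩
    exact (card_lt_card hSU).not_ge (mem_filter.1 hU).2

/-- there is a (canonical) bijection between rooted trees with `n` inputs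
and the descending sequences of partitions `(P₂, …, P_{n−1})` described above. -/
theorem rootedTree_equiv_partitionChain (n : ℕ) (hn : 2 ≤ n) :
    Nonempty (NRootedTree n ≃ PartitionChain n) :=
  ⟨{ toFun := NRootedTree.toChain
     invFun := fun P => P.toTree hn
     left_inv := fun T => Subtype.ext T.family_toChain
     right_inv := fun P => Subtype.ext (funext P.levelPartition_family) }⟩
end

section
/- For n ≥ 4, the S_n-representation A^1(M̄_{0,n}) ≅ H²(M̄_{0,n};ℚ) is isomorphic to ⊕_{a even, 4 ≤ a ≤ n−3 or a = n} U_{a,n−a}; in particular, in terms of characters, ch_n(A^1(M̄_{0,n})) = ∑_{a even, a ≥ 4} s_{(a)}s_{(n−a)} (with the convention s_{(0)} = 1 and the sum over 4 ≤ a ≤ n with n − a = 0 or n − a ≥ 1 as appropriate). Consequently A^1(M̄_{0,n}) is a permutation representation of S_n. -/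
/-! ## Keel's presentation of `A¹(M̄_{0,n})`
By Keel's theorem, `A¹(M̄_{0,n}) = H²(M̄_{0,n};ℚ)` is the ℚ-vector space with
generators the boundary divisor classes `D_I` for `I ⊆ {1,…,n}` with
`2 ≤ |I| ≤ n − 2`, subject to the relations `D_I = D_{Iᶜ}` and, for pairwise distinct
`i, j, k, l`, `∑_{i,j ∈ I; k,l ∉ I} D_I = ∑_{i,k ∈ I; j,l ∉ I} D_I`.  The symmetric group
`S_n` acts by permuting the marked points, i.e. by relabeling the indices `I`. -/

open Finset

/-- Index set of boundary divisors `D_I`, `2 ≤ |I| ≤ n − 2`. -/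
def BIdx (n : ℕ) := {I : Finset (Fin n) // 2 ≤ I.card ∧ I.card ≤ n - 2}

noncomputable instance (n : ℕ) : Fintype (BIdx n) := by unfold BIdx; infer_instance

/-- The Keel relations: `D_I − D_{Iᶜ}` and, for pairwise distinct `i, j, k, l`,
`∑_{i,j∈I; k,l∉I} D_I − ∑_{i,k∈I; j,l∉I} D_I`. -/
def keelRelations (n : ℕ) : Set (BIdx n →₀ ℚ) :=
  {x | ∃ I J : BIdx n, J.1 = I.1ᶜ ∧ x = Finsupp.single I 1 - Finsupp.single J 1} ∪
  {x | ∃ i j k l : Fin n, i ≠ j ∧ i ≠ k ∧ i ≠ l ∧ j ≠ k ∧ j ≠ l ∧ k ≠ l ∧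
      x = (∑ I : BIdx n,
            if i ∈ I.1 ∧ j ∈ I.1 ∧ k ∉ I.1 ∧ l ∉ I.1 then Finsupp.single I (1 : ℚ) else 0)
        - ∑ I : BIdx n,
            if i ∈ I.1 ∧ k ∈ I.1 ∧ j ∉ I.1 ∧ l ∉ I.1 then Finsupp.single I (1 : ℚ) else 0}

/-- The submodule of relations. -/
noncomputable def keelSub (n : ℕ) : Submodule ℚ (BIdx n →₀ ℚ) :=
  Submodule.span ℚ (keelRelations n)

/-- Keel's presentation of `A¹(M̄_{0,n}) = H²(M̄_{0,n};ℚ)`. -/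
abbrev KeelMod (n : ℕ) := (BIdx n →₀ ℚ) ⧸ keelSub n

/-- Relabeling of a boundary index by a permutation of the marked points. -/
def permBIdx (n : ℕ) (σ : Equiv.Perm (Fin n)) (I : BIdx n) : BIdx n :=
  ⟨I.1.image σ, by
    rw [Finset.card_image_of_injective _ σ.injective]; exact I.2⟩

/-- The `S_n`-action on the free module on boundary divisors. -/
noncomputable def keelRelabel (n : ℕ) (σ : Equiv.Perm (Fin n)) :
    (BIdx n →₀ ℚ) →ₗ[ℚ] (BIdx n →₀ ℚ) :=
  Finsupp.lmapDomain ℚ ℚ (permBIdx n σ)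

/-- Index set of the permutation representation `⊕_{a even, 4 ≤ a ≤ n} U_{a,n−a}`:
pairs of an even `a` with `4 ≤ a ≤ n` and an `a`-element subset `A` of `{1,…,n}`
(the case `a = n` contributing the single point giving `U_n`). -/
def TIdx (n : ℕ) := {p : ℕ × Finset (Fin n) // Even p.1 ∧ 4 ≤ p.1 ∧ p.1 ≤ n ∧ p.2.card = p.1}

/-- The `S_n`-action on the index set. -/
def permTIdx (n : ℕ) (σ : Equiv.Perm (Fin n)) (p : TIdx n) : TIdx n :=
  ⟨(p.1.1, p.1.2.image σ), by
    obtain ⟨h1, h2, h3, h4⟩ := p.2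
    refine ⟨h1, h2, h3, ?_⟩
    rw [Finset.card_image_of_injective _ σ.injective]; exact h4⟩

/-!
The map `D_S ↦ ∑ p, keelCoeff p S • e_p` into the permutation module on `TIdx n` is equivariant by
construction, and it kills Keel's relations: `keelCoeff p` is invariant under `S ↦ Sᶜ` because
`#A` is even, and under `S ↦ S ∆ T` for some `T` containing `j, k`, avoiding `i, l` and with
`#(A ∩ T)` even, which exchanges the two sides of a four-point relation.

The rest is Fourier analysis on `Finset (Fin n) ≅ (ℤ/2)ⁿ` with the characters `(-1) ^ #(B ∩ S)`.
Surjectivity: a combination of the `keelCoeff p` vanishing on all `2 ≤ #S ≤ n - 2` is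
complement-symmetric, so at even `B` its transform only sees `∅` and the singletons; evaluating
at pairs, at `univ` and at the sets `A` forces all coefficients to vanish. Dimension bound: a
functional killing the relations is complement-symmetric, so its transform vanishes on odd sets;
if it also vanishes on even sets of size `≥ 4`, only `∅` and pairs remain, and Fourier inversion
at `∅` and at the singletons, together with the four-point relations, kills those as well. Hence
`dim A¹ ≤ #TIdx n`, and the surjection is an isomorphism.
-/

open scoped symmDiff

section Walsh

variable {α R : Type*} [DecidableEq α] [CommRing R]

def walsh (B S : Finset α) : R := (-1) ^ #(B ∩ S)

lemma neg_one_pow_card_symmDiff (X Y : Finset α) :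
    (-1 : R) ^ #(X ∆ Y) = (-1) ^ #X * (-1) ^ #Y := by
  have hunion : #(X ∆ Y) + #(X ∩ Y) = #(X ∪ Y) :=
    (card_union_of_disjoint (disjoint_symmDiff_inf X Y)).symm.trans
      (congrArg card (symmDiff_sup_inf X Y))
  have hcard : #X + #Y = #(X ∆ Y) + 2 * #(X ∩ Y) := by
    have := card_union_add_card_inter X Y
    omega
  rw [← pow_add, hcard, pow_add, pow_mul]
  simp

lemma walsh_comm (B S : Finset α) : (walsh B S : R) = walsh S B := by
  rw [walsh, walsh, inter_comm]

lemma walsh_symmDiff_right (A S T : Finset α) :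
    (walsh A (S ∆ T) : R) = walsh A S * walsh A T := by
  have : A ∩ (S ∆ T) = (A ∩ S) ∆ (A ∩ T) := inf_symmDiff_distrib_left A S T
  rw [walsh, this, neg_one_pow_card_symmDiff, walsh, walsh]

lemma walsh_symmDiff_left (A B S : Finset α) :
    (walsh (A ∆ B) S : R) = walsh A S * walsh B S := by
  simp only [walsh_comm _ S, walsh_symmDiff_right]

@[simp] lemma walsh_empty_left (S : Finset α) : (walsh ∅ S : R) = 1 := by
  simp [walsh]

lemma walsh_singleton_left (m : α) (S : Finset α) :
    (walsh {m} S : R) = if m ∈ S then -1 else 1 := by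
  by_cases hm : m ∈ S <;> simp [walsh, hm]

lemma walsh_pair_left {i j : α} (hij : i ≠ j) (S : Finset α) :
    (walsh {i, j} S : R) = walsh {i} S * walsh {j} S := by
  rw [← walsh_symmDiff_left, symmDiff_eq_union (disjoint_singleton.2 hij), ← insert_eq]

/-- With `s x := walsh {x} S = ±1`, the left side is `(s i - s l) * (s j - s k)`. -/
lemma walsh_pair_add_sub {i j k l : α} (hij : i ≠ j) (hik : i ≠ k) (hjl : j ≠ l)
    (hkl : k ≠ l) (S : Finset α) :
    (walsh {i, j} S + walsh {k, l} S - walsh {i, k} S - walsh {j, l} S : R) =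
      4 * ((if i ∈ S ∧ j ∈ S ∧ k ∉ S ∧ l ∉ S then 1 else 0)
        + (if k ∈ S ∧ l ∈ S ∧ i ∉ S ∧ j ∉ S then 1 else 0)
        - (if i ∈ S ∧ k ∈ S ∧ j ∉ S ∧ l ∉ S then 1 else 0)
        - (if j ∈ S ∧ l ∈ S ∧ i ∉ S ∧ k ∉ S then 1 else 0)) := by
  simp only [walsh_pair_left hij, walsh_pair_left hkl, walsh_pair_left hik, walsh_pair_left hjl,
    walsh_singleton_left]
  by_cases hi : i ∈ S <;> by_cases hj : j ∈ S <;> by_cases hk : k ∈ S <;> by_cases hl : l ∈ S <;>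
    simp [hi, hj, hk, hl] <;> norm_num

variable [Fintype α]

lemma walsh_compl_right (A S : Finset α) : (walsh A Sᶜ : R) = (-1) ^ #A * walsh A S := by
  have : Sᶜ = univ ∆ S := by ext; simp [mem_symmDiff]
  rw [this, walsh_symmDiff_right, walsh, inter_univ]

lemma sum_walsh (C : Finset α) :
    ∑ S, (walsh C S : R) = if C = ∅ then 2 ^ Fintype.card α else 0 := by
  split_ifs with hC
  · simp [hC, Fintype.card_finset]
  obtain ⟨x, hx⟩ := nonempty_iff_ne_empty.mpr hC
  refine sum_involution (fun S _ => S ∆ {x}) (fun S _ => ?_) (fun S _ _ => ?_)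
    (fun _ _ => mem_univ _) (fun S _ => symmDiff_symmDiff_cancel_right _ _)
  · rw [walsh_symmDiff_right, walsh_comm C {x}, walsh_singleton_left, if_pos hx]
    ring
  · simp

lemma sum_walsh_mul_walsh (A B : Finset α) :
    ∑ S, (walsh A S * walsh B S : R) = if A = B then 2 ^ Fintype.card α else 0 := by
  simp_rw [← walsh_symmDiff_left, sum_walsh, symmDiff_eq_empty]

def walshTransform : (Finset α → R) →ₗ[R] (Finset α → R) := (Matrix.of walsh).mulVecLin

lemma walshTransform_apply (f : Finset α → R) (B : Finset α) :
    walshTransform f B = ∑ S, walsh B S * f S := rfl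

lemma walshTransform_walsh (A : Finset α) :
    walshTransform (walsh A) = Pi.single A ((2 : R) ^ Fintype.card α) := by
  ext B
  rw [walshTransform_apply, sum_walsh_mul_walsh, Pi.single_apply]

lemma walshTransform_walshTransform (f : Finset α → R) :
    walshTransform (walshTransform f) = (2 : R) ^ Fintype.card α • f := by
  ext S
  simp only [walshTransform_apply, mul_sum, Pi.smul_apply, smul_eq_mul]
  rw [sum_comm]
  have horth (T : Finset α) :
      ∑ B, (walsh S B * walsh B T : R) = if S = T then 2 ^ Fintype.card α else 0 := by
    simp_rw [walsh_comm _ T]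
    exact sum_walsh_mul_walsh S T
  simp_rw [← mul_assoc, ← sum_mul, horth, ite_mul, zero_mul]
  simp

lemma sum_walshTransform (f : Finset α → R) :
    ∑ B, walshTransform f B = 2 ^ Fintype.card α * f ∅ := by
  simpa [walshTransform_apply] using congrFun (walshTransform_walshTransform f) ∅

end Walsh

section Boundary

variable {α R : Type*} [Fintype α] [DecidableEq α]

lemma sum_ite_card_le_one {M : Type*} [AddCommMonoid M] (h : Finset α → M) :
    ∑ S, (if #S ≤ 1 then h S else 0) = h ∅ + ∑ m, h {m} := by
  have hsplit (S : Finset α) : (if #S ≤ 1 then h S else 0) =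
      (if S = ∅ then h S else 0) + (if #S = 1 then h S else 0) := by
    rcases Nat.lt_or_ge 1 #S with hS | hS
    · rw [if_neg hS.not_ge, if_neg (by rintro rfl; simp at hS), if_neg hS.ne', add_zero]
    rcases Nat.le_one_iff_eq_zero_or_eq_one.1 hS with h0 | h1
    · rw [card_eq_zero.1 h0]
      simp
    · rw [if_pos hS, if_neg (by rintro rfl; simp at h1), if_pos h1, zero_add]
  rw [sum_congr rfl fun S _ => hsplit S, sum_add_distrib, sum_ite_eq' univ ∅, if_pos (mem_univ _),
    ← sum_filter]
  have : univ.filter (fun S : Finset α => #S = 1) = powersetCard 1 univ := by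
    ext S
    simp [mem_powersetCard]
  rw [this, powersetCard_one, sum_map]
  rfl

variable [CommRing R]

lemma walshTransform_eq_of_middle_eq_zero (hα : 3 ≤ Fintype.card α) {f : Finset α → R}
    (hcompl : ∀ S, f Sᶜ = f S) (hmid : ∀ S, 2 ≤ #S → #S ≤ Fintype.card α - 2 → f S = 0)
    {B : Finset α} (hB : Even #B) :
    walshTransform f B = 2 * (f ∅ + ∑ m, f {m} - 2 * ∑ m ∈ B, f {m}) := by
  have hlarge : ∑ S, (if #S ≤ 1 then 0 else walsh B S * f S) =
      ∑ S, (if #S ≤ 1 then walsh B S * f S else 0) := by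
    refine Fintype.sum_bijective compl compl_involutive.bijective _ _ fun S => ?_
    have hcard : #Sᶜ = Fintype.card α - #S := card_compl S
    have hle : #S ≤ Fintype.card α := card_le_univ S
    rw [walsh_compl_right, hcompl, hB.neg_one_pow, one_mul]
    by_cases h1 : #S ≤ 1
    · rw [if_pos h1, if_neg (by omega)]
    by_cases h2 : #Sᶜ ≤ 1
    · rw [if_pos h2, if_neg h1]
    · rw [if_neg h2, if_neg h1, hmid S (by omega) (by omega), mul_zero]
  have hsmall : ∑ S, (if #S ≤ 1 then walsh B S * f S else 0) =
      f ∅ + ∑ m, f {m} - 2 * ∑ m ∈ B, f {m} := by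
    rw [sum_ite_card_le_one]
    simp only [walsh_comm B, walsh_empty_left, one_mul, walsh_singleton_left, ite_mul, neg_one_mul]
    have hterm (x : α) :
        (if x ∈ B then -f {x} else f {x}) = f {x} - 2 * if x ∈ B then f {x} else 0 := by
      split_ifs <;> ring
    rw [sum_congr rfl fun x _ => hterm x, sum_sub_distrib, ← mul_sum, sum_ite_mem, univ_inter,
      add_sub_assoc]
  calc walshTransform f B
      = ∑ S, (if #S ≤ 1 then walsh B S * f S else 0)
        + ∑ S, (if #S ≤ 1 then 0 else walsh B S * f S) := by
        rw [walshTransform_apply, ← sum_add_distrib]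
        exact sum_congr rfl fun S _ => by split_ifs <;> simp
    _ = 2 * (f ∅ + ∑ m, f {m} - 2 * ∑ m ∈ B, f {m}) := by rw [hlarge, hsmall]; ring

end Boundary

section Separating

variable {α M : Type*} [Fintype α] [DecidableEq α] [AddCommMonoid M]

def separatingSum (F : Finset α → M) (i j k l : α) : M :=
  ∑ S, if i ∈ S ∧ j ∈ S ∧ k ∉ S ∧ l ∉ S then F S else 0

lemma separatingSum_swap_of_symmDiff_invariant {F : Finset α → M} {i j k l : α} (T : Finset α)
    (hi : i ∉ T) (hj : j ∈ T) (hk : k ∈ T) (hl : l ∉ T) (hF : ∀ S, F (S ∆ T) = F S) :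
    separatingSum F i j k l = separatingSum F i k j l := by
  refine Fintype.sum_bijective (· ∆ T) (symmDiff_left_involutive T).bijective _ _ fun S => ?_
  simp only [mem_symmDiff, hi, hj, hk, hl, hF]
  exact if_congr (by tauto) rfl rfl

lemma separatingSum_compl {F : Finset α → M} (hF : ∀ S, F Sᶜ = F S) (i j k l : α) :
    separatingSum F k l i j = separatingSum F i j k l := by
  refine Fintype.sum_bijective compl compl_involutive.bijective _ _ fun S => ?_
  simp only [mem_compl, not_not, hF]
  exact if_congr (by tauto) rfl rfl

lemma walshTransform_pair_add {R : Type*} [CommRing R] {G : Finset α → R}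
    (hcompl : ∀ S, G Sᶜ = G S) {i j k l : α} (hij : i ≠ j) (hik : i ≠ k) (hjl : j ≠ l)
    (hkl : k ≠ l) (hsep : separatingSum G i j k l = separatingSum G i k j l) :
    walshTransform G {i, j} + walshTransform G {k, l} =
      walshTransform G {i, k} + walshTransform G {j, l} := by
  have hdiff : walshTransform G {i, j} + walshTransform G {k, l} - walshTransform G {i, k}
      - walshTransform G {j, l} = 4 * (separatingSum G i j k l + separatingSum G k l i j
        - separatingSum G i k j l - separatingSum G j l i k) := by
    simp only [walshTransform_apply, separatingSum, ← sum_add_distrib, ← sum_sub_distrib, mul_sum]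
    refine sum_congr rfl fun S _ => ?_
    rw [← add_mul, ← sub_mul, ← sub_mul, walsh_pair_add_sub hij hik hjl hkl]
    simp only [mul_add, mul_sub, add_mul, sub_mul, mul_assoc, ite_mul, one_mul, zero_mul]
  rw [separatingSum_compl hcompl i j k l, separatingSum_compl hcompl i k j l, hsep] at hdiff
  linear_combination hdiff

end Separating

section Recovery

variable {α K : Type*} [Fintype α] [DecidableEq α] [Field K] [CharZero K]

lemma pair_eq_zero_of_add_of_sum (hα : 3 ≤ Fintype.card α) (h : Finset α → K)
    (hadd : ∀ i j k l : α, i ≠ j → i ≠ k → i ≠ l → j ≠ k → j ≠ l → k ≠ l →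
      h {i, j} + h {k, l} = h {i, k} + h {j, l})
    (hrow : ∀ m, ∑ x ∈ univ.erase m, h {m, x} = 0) {i j : α} (hij : i ≠ j) : h {i, j} = 0 := by
  have hswap : ∀ i j k : α, i ≠ j → i ≠ k → j ≠ k → h {i, k} = h {j, k} := by
    intro i j k hij hik hjk
    -- `h {i, x} - h {j, x}` is the same for all `x ∉ {i, j}`, and these terms sum to `0`
    set E := (univ.erase i).erase j
    have hconst : ∀ x ∈ E, h {i, x} - h {j, x} = h {i, k} - h {j, k} := by
      intro x hx
      obtain ⟨hxj, hxi⟩ : x ≠ j ∧ x ≠ i := by simpa [E] using hx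
      rcases eq_or_ne x k with rfl | hxk
      · rfl
      have := hadd i x k j hxi.symm hik hij hxk hxj (Ne.symm hjk)
      rw [pair_comm k j, pair_comm x j] at this
      linear_combination this
    have hsum : ∑ x ∈ E, (h {i, x} - h {j, x}) = 0 := by
      have hi := hrow i
      have hj := hrow j
      rw [← add_sum_erase _ _ (mem_erase.2 ⟨Ne.symm hij, mem_univ j⟩)] at hi
      rw [← add_sum_erase _ _ (mem_erase.2 ⟨hij, mem_univ i⟩), erase_right_comm,
        pair_comm j i] at hj
      rw [sum_sub_distrib]
      linear_combination hi - hj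
    rw [sum_congr rfl hconst, sum_const, card_erase_of_mem (mem_erase.2 ⟨Ne.symm hij, mem_univ j⟩),
      card_erase_of_mem (mem_univ i), card_univ, nsmul_eq_mul, mul_eq_zero, sub_eq_zero] at hsum
    exact hsum.resolve_left (Nat.cast_ne_zero.2 (by omega))
  have hrow_const : ∀ x ∈ univ.erase i, h {i, x} = h {i, j} := by
    intro x hx
    rcases eq_or_ne x j with rfl | hxj
    · rfl
    rw [pair_comm i x, pair_comm i j]
    exact hswap x j i hxj (mem_erase.1 hx).1 (Ne.symm hij)
  have := hrow i
  rw [sum_congr rfl hrow_const, sum_const, card_erase_of_mem (mem_univ i), card_univ, nsmul_eq_mul,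
    mul_eq_zero] at this
  exact this.resolve_left (Nat.cast_ne_zero.2 (by omega))

lemma sum_ite_mem_eq_sum_pair {M : Type*} [AddCommMonoid M] (f : Finset α → M) (m : α)
    (hf : ∀ B, m ∈ B → #B ≠ 2 → f B = 0) :
    ∑ B, (if m ∈ B then f B else 0) = ∑ x ∈ univ.erase m, f {m, x} := by
  have hinj : Set.InjOn (fun x => ({m, x} : Finset α)) (univ.erase m : Finset α) := by
    intro x hx y hy hxy
    have : x ∈ ({m, y} : Finset α) := by
      rw [← show ({m, x} : Finset α) = {m, y} from hxy]
      simp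
    simpa [(mem_erase.1 hx).1] using this
  rw [← sum_filter, ← sum_image hinj]
  refine (sum_subset (fun B hB => ?_) fun B hB hBim => hf B ?_ fun h2 => hBim ?_).symm
  · obtain ⟨x, -, rfl⟩ := mem_image.1 hB
    simp
  · exact (mem_filter.1 hB).2
  · obtain ⟨a, b, hab, rfl⟩ := card_eq_two.1 h2
    rcases mem_insert.1 (mem_filter.1 hB).2 with rfl | hb
    · exact mem_image.2 ⟨b, mem_erase.2 ⟨Ne.symm hab, mem_univ b⟩, rfl⟩
    · rw [mem_singleton.1 hb]
      exact mem_image.2 ⟨a, mem_erase.2 ⟨hab, mem_univ a⟩, pair_comm _ _⟩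

lemma walshTransform_eq_zero_of_odd {G : Finset α → K} (hcompl : ∀ S, G Sᶜ = G S) {B : Finset α}
    (hB : Odd #B) : walshTransform G B = 0 := by
  have hneg : walshTransform G B = -walshTransform G B := by
    rw [walshTransform_apply, ← sum_neg_distrib]
    refine Fintype.sum_bijective compl compl_involutive.bijective _ _ fun S => ?_
    rw [walsh_compl_right, hcompl, hB.neg_one_pow]
    ring
  linear_combination hneg / 2

lemma sum_walshTransform_pair_eq_zero {G : Finset α → K} (hempty : G ∅ = 0) {m : α}
    (hm : G {m} = 0) (hsupp : ∀ B, m ∈ B → #B ≠ 2 → walshTransform G B = 0) :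
    ∑ x ∈ univ.erase m, walshTransform G {m, x} = 0 := by
  have htotal : ∑ B, walshTransform G B = 0 := by rw [sum_walshTransform, hempty, mul_zero]
  have hsingle : ∑ B, walsh {m} B * walshTransform G B = 0 := by
    rw [← walshTransform_apply, walshTransform_walshTransform, Pi.smul_apply, hm, smul_zero]
  have h2 : 2 * ∑ B, (if m ∈ B then walshTransform G B else 0) = 0 :=
    calc 2 * ∑ B, (if m ∈ B then walshTransform G B else 0)
        = ∑ B, (walshTransform G B - walsh {m} B * walshTransform G B) := by
          rw [mul_sum]
          refine sum_congr rfl fun B _ => ?_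
          rw [walsh_singleton_left]
          split_ifs <;> ring
      _ = 0 := by rw [sum_sub_distrib, htotal, hsingle, sub_zero]
  rw [← sum_ite_mem_eq_sum_pair _ m hsupp]
  exact (mul_eq_zero.1 h2).resolve_left two_ne_zero

theorem eq_zero_of_walshTransform_even_eq_zero (hα : 3 ≤ Fintype.card α) {G : Finset α → K}
    (hempty : G ∅ = 0) (hsingleton : ∀ m, G {m} = 0) (hcompl : ∀ S, G Sᶜ = G S)
    (hsep : ∀ i j k l : α, i ≠ j → i ≠ k → i ≠ l → j ≠ k → j ≠ l → k ≠ l →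
      separatingSum G i j k l = separatingSum G i k j l)
    (hG : ∀ B : Finset α, Even #B → 4 ≤ #B → walshTransform G B = 0) : G = 0 := by
  have hsupp (B : Finset α) (hB : B ≠ ∅) (h2 : #B ≠ 2) : walshTransform G B = 0 := by
    have := card_pos.2 (nonempty_iff_ne_empty.2 hB)
    rcases Nat.even_or_odd #B with heven | hodd
    · exact hG B heven (by obtain ⟨r, hr⟩ := heven; omega)
    · exact walshTransform_eq_zero_of_odd hcompl hodd
  have hpair (i j : α) (hij : i ≠ j) : walshTransform G {i, j} = 0 :=
    pair_eq_zero_of_add_of_sum hα (walshTransform G)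
      (fun i j k l hij hik hil hjk hjl hkl => walshTransform_pair_add hcompl hij hik hjl hkl
        (hsep i j k l hij hik hil hjk hjl hkl))
      (fun m => sum_walshTransform_pair_eq_zero hempty (hsingleton m)
        fun B hm => hsupp B (ne_empty_of_mem hm)) hij
  have hzero (B : Finset α) (hB : B ≠ ∅) : walshTransform G B = 0 := by
    by_cases h2 : #B = 2
    · obtain ⟨a, b, hab, rfl⟩ := card_eq_two.1 h2
      exact hpair a b hab
    · exact hsupp B hB h2
  have htotal : ∑ B, walshTransform G B = 0 := by rw [sum_walshTransform, hempty, mul_zero]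
  have hĜ : walshTransform G = 0 := by
    ext B
    by_cases hB : B = ∅
    · rwa [hB, ← sum_eq_single_of_mem ∅ (mem_univ _) fun C _ hC => hzero C hC]
    · exact hzero B hB
  have := walshTransform_walshTransform G
  rw [hĜ, map_zero, eq_comm, smul_eq_zero] at this
  exact this.resolve_left (pow_ne_zero _ two_ne_zero)

end Recovery

namespace TIdx

lemma snd_injective (n : ℕ) : Function.Injective fun p : TIdx n => p.1.2 := by
  rintro ⟨⟨a, A⟩, ha⟩ ⟨⟨b, B⟩, hb⟩ (rfl : A = B)
  obtain rfl : a = b := ha.2.2.2.symm.trans hb.2.2.2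
  rfl

noncomputable instance (n : ℕ) : Fintype (TIdx n) := Fintype.ofInjective _ (snd_injective n)

lemma eq_of_fst_eq_n {n : ℕ} {p q : TIdx n} (hp : p.1.1 = n) (hq : q.1.1 = n) : p = q := by
  have huniv (r : TIdx n) (hr : r.1.1 = n) : r.1.2 = univ :=
    eq_univ_of_card _ (by rw [r.2.2.2.2, hr, Fintype.card_fin])
  exact snd_injective n ((huniv p hp).trans (huniv q hq).symm)

lemma even_card {n : ℕ} (p : TIdx n) : Even #p.1.2 := p.2.2.2.2 ▸ p.2.1

lemma four_le_card {n : ℕ} (p : TIdx n) : 4 ≤ #p.1.2 := p.2.2.2.2 ▸ p.2.2.1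

end TIdx

section KeelCoefficients

variable {n : ℕ}

/-- The coefficient of `D_S` on the basis vector `p = (a, A)`: `1` if `a = n`, and otherwise `1` or
`0` according as `#(A ∩ S)` is odd or even. -/
noncomputable def keelCoeff (p : TIdx n) : Finset (Fin n) → ℚ :=
  if p.1.1 = n then 1 else (2 : ℚ)⁻¹ • (1 - walsh p.1.2)

lemma keelCoeff_of_eq {p : TIdx n} (hp : p.1.1 = n) (S : Finset (Fin n)) : keelCoeff p S = 1 := by
  simp [keelCoeff, hp]

lemma keelCoeff_of_ne {p : TIdx n} (hp : p.1.1 ≠ n) (S : Finset (Fin n)) :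
    keelCoeff p S = (1 - walsh p.1.2 S) / 2 := by
  simp [keelCoeff, hp, div_eq_inv_mul]

lemma keelCoeff_empty (p : TIdx n) : keelCoeff p ∅ = if p.1.1 = n then 1 else 0 := by
  split_ifs with hp
  · exact keelCoeff_of_eq hp ∅
  · simp [keelCoeff_of_ne hp, walsh]

lemma keelCoeff_compl (p : TIdx n) (S : Finset (Fin n)) : keelCoeff p Sᶜ = keelCoeff p S := by
  by_cases hp : p.1.1 = n
  · simp [keelCoeff_of_eq hp]
  · simp [keelCoeff_of_ne hp, walsh_compl_right, p.even_card.neg_one_pow]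

lemma keelCoeff_symmDiff {p : TIdx n} {T : Finset (Fin n)} (hT : walsh p.1.2 T = (1 : ℚ))
    (S : Finset (Fin n)) : keelCoeff p (S ∆ T) = keelCoeff p S := by
  by_cases hp : p.1.1 = n
  · simp [keelCoeff_of_eq hp]
  · simp [keelCoeff_of_ne hp, walsh_symmDiff_right, hT]

lemma exists_walsh_eq_one {A : Finset (Fin n)} (hA : 4 ≤ #A) {i j k l : Fin n} (hij : i ≠ j)
    (hik : i ≠ k) (hjk : j ≠ k) (hjl : j ≠ l) (hkl : k ≠ l) :
    ∃ T, i ∉ T ∧ j ∈ T ∧ k ∈ T ∧ l ∉ T ∧ walsh A T = (1 : ℚ) := by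
  by_cases hjk1 : walsh A {j, k} = (1 : ℚ)
  · exact ⟨{j, k}, by simp [hij, hik], by simp, by simp, by simp [hjl.symm, hkl.symm], hjk1⟩
  obtain ⟨x, hxA, hx⟩ : ∃ x ∈ A, x ∉ ({i, j, k, l} : Finset (Fin n)) := by
    by_contra! hsub
    have hAeq : A = {i, j, k, l} := eq_of_subset_of_card_le hsub (card_le_four.trans hA)
    apply hjk1
    rw [walsh_comm, walsh_pair_left hjk, walsh_singleton_left, walsh_singleton_left, hAeq]
    simp
  simp only [mem_insert, mem_singleton, not_or] at hx
  obtain ⟨hxi, hxj, hxk, hxl⟩ := hx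
  have hjk_neg : walsh A {j, k} = (-1 : ℚ) := (neg_one_pow_eq_or ℚ _).resolve_left hjk1
  refine ⟨insert x {j, k}, by simp [hij, hik, Ne.symm hxi], by simp, by simp,
    by simp [hjl.symm, hkl.symm, Ne.symm hxl], ?_⟩
  rw [insert_eq, ← symmDiff_eq_union (by simp [hxj, hxk]), walsh_symmDiff_right, hjk_neg,
    walsh_comm A, walsh_singleton_left, if_pos hxA]
  norm_num

lemma keelCoeff_separatingSum (p : TIdx n) {i j k l : Fin n} (hij : i ≠ j) (hik : i ≠ k)
    (hjk : j ≠ k) (hjl : j ≠ l) (hkl : k ≠ l) :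
    separatingSum (keelCoeff p) i j k l = separatingSum (keelCoeff p) i k j l := by
  obtain ⟨T, hi, hj, hk, hl, hT⟩ := exists_walsh_eq_one p.four_le_card hij hik hjk hjl hkl
  exact separatingSum_swap_of_symmDiff_invariant T hi hj hk hl (keelCoeff_symmDiff hT)

end KeelCoefficients

section KeelRelations

variable {n : ℕ} {M : Type*}

def BIdx.compl (I : BIdx n) : BIdx n :=
  ⟨I.1ᶜ, by have := I.2; rw [card_compl, Fintype.card_fin]; omega⟩

lemma sum_bidx [AddCommMonoid M] (F : Finset (Fin n) → M) :
    ∑ I : BIdx n, F I.1 = ∑ S, if 2 ≤ #S ∧ #S ≤ n - 2 then F S else 0 := by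
  rw [← sum_filter]
  exact (sum_subtype _ (by simp) F).symm

lemma sum_bidx_ite_eq_separatingSum [AddCommMonoid M] (F : Finset (Fin n) → M) {i j k l : Fin n}
    (hij : i ≠ j) (hkl : k ≠ l) :
    ∑ I : BIdx n, (if i ∈ I.1 ∧ j ∈ I.1 ∧ k ∉ I.1 ∧ l ∉ I.1 then F I.1 else 0) =
      separatingSum F i j k l := by
  rw [sum_bidx fun S => if i ∈ S ∧ j ∈ S ∧ k ∉ S ∧ l ∉ S then F S else 0, separatingSum]
  refine sum_congr rfl fun S _ => ?_
  split_ifs with hmid hsep hsep <;> try rfl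
  obtain ⟨hi, hj, hk, hl⟩ := hsep
  have hlow : #({i, j} : Finset (Fin n)) ≤ #S := card_le_card (by simp [insert_subset_iff, hi, hj])
  have hhigh : #S + #({k, l} : Finset (Fin n)) ≤ n := by
    rw [← card_union_of_disjoint (by simp [hk, hl])]
    exact (card_le_univ _).trans_eq (Fintype.card_fin n)
  rw [card_pair hij] at hlow
  rw [card_pair hkl] at hhigh
  exact absurd ⟨hlow, by omega⟩ hmid

lemma keelSub_le_ker_iff [AddCommGroup M] [Module ℚ M] (ψ : (BIdx n →₀ ℚ) →ₗ[ℚ] M)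
    (F : Finset (Fin n) → M) (hF : ∀ I : BIdx n, ψ (Finsupp.single I 1) = F I.1) :
    keelSub n ≤ LinearMap.ker ψ ↔ (∀ I : BIdx n, F I.1ᶜ = F I.1) ∧
      ∀ i j k l : Fin n, i ≠ j → i ≠ k → i ≠ l → j ≠ k → j ≠ l → k ≠ l →
        separatingSum F i j k l = separatingSum F i k j l := by
  have hpair (I J : BIdx n) (hJ : J.1 = I.1ᶜ) :
      ψ (Finsupp.single I 1 - Finsupp.single J 1) = F I.1 - F I.1ᶜ := by
    rw [map_sub, hF, hF, hJ]
  have hfour (i j k l : Fin n) (hij : i ≠ j) (hik : i ≠ k) (hjl : j ≠ l) (hkl : k ≠ l) :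
      ψ ((∑ I : BIdx n, if i ∈ I.1 ∧ j ∈ I.1 ∧ k ∉ I.1 ∧ l ∉ I.1
            then Finsupp.single I (1 : ℚ) else 0) -
          ∑ I : BIdx n, if i ∈ I.1 ∧ k ∈ I.1 ∧ j ∉ I.1 ∧ l ∉ I.1
            then Finsupp.single I (1 : ℚ) else 0) =
        separatingSum F i j k l - separatingSum F i k j l := by
    simp only [map_sub, map_sum, apply_ite ψ, map_zero, hF]
    rw [sum_bidx_ite_eq_separatingSum F hij hkl, sum_bidx_ite_eq_separatingSum F hik hjl]
  rw [keelSub, Submodule.span_le]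
  constructor
  · intro h
    refine ⟨fun I => ?_, fun i j k l hij hik hil hjk hjl hkl => ?_⟩
    · have := h (Or.inl ⟨I, I.compl, rfl, rfl⟩)
      rw [SetLike.mem_coe, LinearMap.mem_ker, hpair I I.compl rfl, sub_eq_zero] at this
      exact this.symm
    · have := h (Or.inr ⟨i, j, k, l, hij, hik, hil, hjk, hjl, hkl, rfl⟩)
      rwa [SetLike.mem_coe, LinearMap.mem_ker, hfour i j k l hij hik hjl hkl, sub_eq_zero] at this
  · rintro ⟨hcompl, hsep⟩ r (⟨I, J, hJ, rfl⟩ | ⟨i, j, k, l, hij, hik, hil, hjk, hjl, hkl, rfl⟩)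
    · rw [SetLike.mem_coe, LinearMap.mem_ker, hpair I J hJ, hcompl, sub_self]
    · rw [SetLike.mem_coe, LinearMap.mem_ker, hfour i j k l hij hik hjl hkl,
        hsep i j k l hij hik hil hjk hjl hkl, sub_self]

end KeelRelations

section KeelMap

variable {n : ℕ}

noncomputable def keelMap (n : ℕ) : (BIdx n →₀ ℚ) →ₗ[ℚ] (TIdx n →₀ ℚ) :=
  Finsupp.linearCombination ℚ fun I => Finsupp.equivFunOnFinite.symm fun p => keelCoeff p I.1

lemma keelMap_single (I : BIdx n) :
    keelMap n (Finsupp.single I 1) = Finsupp.equivFunOnFinite.symm fun p => keelCoeff p I.1 := by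
  rw [keelMap, Finsupp.linearCombination_single, one_smul]

lemma keelSub_le_ker_keelMap : keelSub n ≤ LinearMap.ker (keelMap n) := by
  intro x hx
  rw [LinearMap.mem_ker]
  ext p
  have hp : keelSub n ≤ LinearMap.ker (Finsupp.lapply p ∘ₗ keelMap n) :=
    (keelSub_le_ker_iff _ (keelCoeff p) fun I => by simp [keelMap_single]).2
      ⟨fun I => keelCoeff_compl p I.1, fun i j k l hij hik _ hjk hjl hkl =>
        keelCoeff_separatingSum p hij hik hjk hjl hkl⟩
  exact hp hx

lemma permTIdx_inv_apply (σ : Equiv.Perm (Fin n)) (p : TIdx n) :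
    permTIdx n σ⁻¹ (permTIdx n σ p) = p := by
  apply TIdx.snd_injective
  simp [permTIdx, image_image]

lemma keelCoeff_permTIdx (σ : Equiv.Perm (Fin n)) (p : TIdx n) (S : Finset (Fin n)) :
    keelCoeff (permTIdx n σ p) (S.image σ) = keelCoeff p S := by
  by_cases hp : p.1.1 = n
  · rw [keelCoeff_of_eq (p := permTIdx n σ p) hp, keelCoeff_of_eq hp]
  · rw [keelCoeff_of_ne (p := permTIdx n σ p) hp, keelCoeff_of_ne hp, walsh, walsh, permTIdx,
      ← image_inter _ _ σ.injective, card_image_of_injective _ σ.injective]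

lemma keelMap_keelRelabel (σ : Equiv.Perm (Fin n)) (x : BIdx n →₀ ℚ) :
    keelMap n (keelRelabel n σ x) = Finsupp.mapDomain (permTIdx n σ) (keelMap n x) := by
  have hinj : Function.Injective (permTIdx n σ) :=
    Function.LeftInverse.injective (permTIdx_inv_apply σ)
  suffices keelMap n ∘ₗ keelRelabel n σ = Finsupp.lmapDomain ℚ ℚ (permTIdx n σ) ∘ₗ keelMap n from
    LinearMap.congr_fun this x
  refine Finsupp.lhom_ext' fun I => LinearMap.ext_ring ?_
  ext q
  obtain ⟨p, rfl⟩ : ∃ p, permTIdx n σ p = q := by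
    refine ⟨permTIdx n σ⁻¹ q, ?_⟩
    simpa using permTIdx_inv_apply σ⁻¹ q
  simp only [LinearMap.comp_apply, keelRelabel, Finsupp.lmapDomain_apply, Finsupp.lsingle_apply,
    Finsupp.mapDomain_single, keelMap_single, Finsupp.mapDomain_apply hinj,
    Finsupp.coe_equivFunOnFinite_symm]
  exact keelCoeff_permTIdx σ p I.1

end KeelMap

section KeelMapSurjective

variable {n : ℕ}

lemma walshTransform_keelCoeff (p : TIdx n) {B : Finset (Fin n)} (hB : B ≠ ∅) :
    walshTransform (keelCoeff p) B = if p.1.1 ≠ n ∧ B = p.1.2 then -2 ^ n / 2 else 0 := by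
  have hone : (1 : Finset (Fin n) → ℚ) = walsh ∅ := funext fun S => (walsh_empty_left S).symm
  have hempty : walshTransform (1 : Finset (Fin n) → ℚ) B = 0 := by
    rw [hone, walshTransform_walsh, Pi.single_eq_of_ne hB]
  by_cases hp : p.1.1 = n
  · simp [keelCoeff, hp, hempty]
  · simp only [keelCoeff, hp, if_false, map_smul, map_sub, Pi.smul_apply, Pi.sub_apply, hempty,
      walshTransform_walsh, Pi.single_apply, Fintype.card_fin, ne_eq, not_false_eq_true, true_and,
      smul_eq_mul]
    split_ifs <;> ring

noncomputable def keelComb (c : TIdx n → ℚ) : Finset (Fin n) → ℚ := ∑ p, c p • keelCoeff p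

lemma keelComb_compl (c : TIdx n → ℚ) (S : Finset (Fin n)) : keelComb c Sᶜ = keelComb c S := by
  simp [keelComb, keelCoeff_compl]

lemma keelComb_empty (c : TIdx n → ℚ) : keelComb c ∅ = ∑ p, if p.1.1 = n then c p else 0 := by
  simp [keelComb, keelCoeff_empty]

lemma walshTransform_keelComb (c : TIdx n → ℚ) {B : Finset (Fin n)} (hB : B ≠ ∅) :
    walshTransform (keelComb c) B =
      ∑ p, c p * if p.1.1 ≠ n ∧ B = p.1.2 then -2 ^ n / 2 else 0 := by
  simp only [keelComb, map_sum, map_smul, Finset.sum_apply, Pi.smul_apply,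
    walshTransform_keelCoeff _ hB, smul_eq_mul]

lemma walshTransform_keelComb_eq_zero (c : TIdx n → ℚ) {B : Finset (Fin n)} (hB : B ≠ ∅)
    (hne : ∀ p : TIdx n, p.1.1 ≠ n → B ≠ p.1.2) : walshTransform (keelComb c) B = 0 :=
  (walshTransform_keelComb c hB).trans <| sum_eq_zero fun p _ => by
    rw [if_neg fun h => hne p h.1 h.2, mul_zero]

lemma walshTransform_keelComb_of_even (hn : 4 ≤ n) {c : TIdx n → ℚ}
    (hc : ∀ S : Finset (Fin n), 2 ≤ #S → #S ≤ n - 2 → keelComb c S = 0) {B : Finset (Fin n)}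
    (hB : Even #B) :
    walshTransform (keelComb c) B =
      2 * (keelComb c ∅ + ∑ m, keelComb c {m} - 2 * ∑ m ∈ B, keelComb c {m}) :=
  walshTransform_eq_of_middle_eq_zero (by simp only [Fintype.card_fin]; omega) (keelComb_compl c)
    (by simpa only [Fintype.card_fin] using hc) hB

lemma keelComb_pair (hn : 4 ≤ n) {c : TIdx n → ℚ}
    (hc : ∀ S : Finset (Fin n), 2 ≤ #S → #S ≤ n - 2 → keelComb c S = 0) {i j : Fin n}
    (hij : i ≠ j) :
    keelComb c ∅ + ∑ m, keelComb c {m} = 2 * (keelComb c {i} + keelComb c {j}) := by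
  have h := walshTransform_keelComb_of_even hn hc (B := {i, j}) (by rw [card_pair hij]; decide)
  rw [walshTransform_keelComb_eq_zero c (insert_ne_empty _ _) fun p _ h => by
    have := p.four_le_card; rw [← h, card_pair hij] at this; omega, sum_pair hij] at h
  linear_combination -h / 2

lemma keelComb_singleton_eq (hn : 4 ≤ n) {c : TIdx n → ℚ}
    (hc : ∀ S : Finset (Fin n), 2 ≤ #S → #S ≤ n - 2 → keelComb c S = 0) (i j : Fin n) :
    keelComb c {i} = keelComb c {j} := by
  rcases eq_or_ne i j with rfl | hij
  · rfl
  obtain ⟨k, -, hk⟩ := exists_mem_notMem_of_card_lt_card (s := {i, j}) (t := univ)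
    (card_le_two.trans_lt (by rw [card_univ, Fintype.card_fin]; omega))
  simp only [mem_insert, mem_singleton, not_or] at hk
  linear_combination
    (keelComb_pair hn hc (Ne.symm hk.1) - keelComb_pair hn hc (Ne.symm hk.2)) / (-2)

lemma keelComb_empty_and_singleton_eq_zero (hn : 4 ≤ n) {c : TIdx n → ℚ}
    (hc : ∀ S : Finset (Fin n), 2 ≤ #S → #S ≤ n - 2 → keelComb c S = 0) :
    keelComb c ∅ = 0 ∧ ∀ m, keelComb c {m} = 0 := by
  set t := keelComb c {⟨0, by omega⟩}
  have hconst (m : Fin n) : keelComb c {m} = t := keelComb_singleton_eq hn hc m _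
  have hsum : ∑ m, keelComb c {m} = n * t := by
    rw [sum_congr rfl fun m _ => hconst m, sum_const, card_univ, Fintype.card_fin, nsmul_eq_mul]
  have h01 := keelComb_pair hn hc (i := ⟨0, by omega⟩) (j := ⟨1, by omega⟩) (by simp)
  rw [hsum, hconst, hconst] at h01
  have hn' : (4 : ℚ) ≤ n := by exact_mod_cast hn
  suffices keelComb c ∅ = 0 ∧ t = 0 from ⟨this.1, fun m => (hconst m).trans this.2⟩
  -- the last relation comes from `B = univ` for even `n`, and from the absence of `U_n` for odd `n`
  rcases Nat.even_or_odd n with heven | hodd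
  · have h := walshTransform_keelComb_of_even hn hc (B := univ)
      (by rwa [card_univ, Fintype.card_fin])
    rw [walshTransform_keelComb_eq_zero c (ne_empty_of_mem (mem_univ ⟨0, by omega⟩)) fun p hp h =>
      hp (by rw [← p.2.2.2.2, ← h, card_univ, Fintype.card_fin]), hsum] at h
    have ht : ((2 : ℚ) * n - 4) * t = 0 := by linear_combination h01 + h / 2
    have ht0 : t = 0 := (mul_eq_zero.1 ht).resolve_left (by linarith)
    exact ⟨by linear_combination h01 + (4 - n : ℚ) * ht0, ht0⟩
  · have hempty : keelComb c ∅ = 0 := by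
      rw [keelComb_empty]
      exact sum_eq_zero fun p _ =>
        if_neg fun h : p.1.1 = n => Nat.not_even_iff_odd.2 hodd (h ▸ p.2.1)
    have hn5 : (5 : ℚ) ≤ n := by
      have : n ≠ 4 := by rintro rfl; exact absurd hodd (by decide)
      exact_mod_cast (show 5 ≤ n by omega)
    rw [hempty] at h01
    exact ⟨hempty, (mul_eq_zero.1 (by linear_combination h01 : ((n : ℚ) - 4) * t = 0)).resolve_left
      (by linarith)⟩

lemma keelComb_eq_zero (hn : 4 ≤ n) {c : TIdx n → ℚ}
    (hc : ∀ S : Finset (Fin n), 2 ≤ #S → #S ≤ n - 2 → keelComb c S = 0) : keelComb c = 0 := by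
  obtain ⟨hempty, hsingleton⟩ := keelComb_empty_and_singleton_eq_zero hn hc
  have hsmall (S : Finset (Fin n)) (hS : #S ≤ 1) : keelComb c S = 0 := by
    obtain h0 | h1 := Nat.le_one_iff_eq_zero_or_eq_one.1 hS
    · rw [card_eq_zero.1 h0, hempty]
    · obtain ⟨m, rfl⟩ := card_eq_one.1 h1
      exact hsingleton m
  ext S
  have hcompl : #Sᶜ = n - #S := by rw [card_compl, Fintype.card_fin]
  have hle : #S ≤ n := (card_le_univ S).trans_eq (Fintype.card_fin n)
  by_cases h1 : #S ≤ 1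
  · exact hsmall S h1
  by_cases h2 : #Sᶜ ≤ 1
  · rw [← keelComb_compl]
    exact hsmall _ h2
  · exact hc S (by omega) (by omega)

lemma eq_zero_of_keelComb_eq_zero (hn : 4 ≤ n) {c : TIdx n → ℚ}
    (hc : ∀ S : Finset (Fin n), 2 ≤ #S → #S ≤ n - 2 → keelComb c S = 0) : c = 0 := by
  have hu := keelComb_eq_zero hn hc
  ext q
  by_cases hq : q.1.1 = n
  · have h := keelComb_empty c
    rwa [hu, sum_eq_single q (fun p _ hpq => if_neg fun hp => hpq (TIdx.eq_of_fst_eq_n hp hq))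
      (by simp), if_pos hq, Pi.zero_apply, eq_comm] at h
  · have h := walshTransform_keelComb c (B := q.1.2)
      (card_pos.1 (by have := q.four_le_card; omega)).ne_empty
    rw [hu, map_zero, Pi.zero_apply, sum_eq_single q (fun p _ hpq => by
      rw [if_neg fun h => hpq (TIdx.snd_injective n h.2.symm), mul_zero]) (by simp),
      if_pos ⟨hq, rfl⟩] at h
    exact (mul_eq_zero.1 h.symm).resolve_right (by norm_num)

lemma dual_apply_keelMap_single (γ : Module.Dual ℚ (TIdx n →₀ ℚ)) (I : BIdx n) :
    γ (keelMap n (Finsupp.single I 1)) = keelComb (fun p => γ (Finsupp.single p 1)) I.1 := by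
  rw [keelMap_single, Finsupp.equivFunOnFinite_symm_eq_sum, map_sum]
  simp only [keelComb, Finset.sum_apply, Pi.smul_apply, smul_eq_mul]
  refine sum_congr rfl fun p _ => ?_
  rw [← Finsupp.smul_single_one p (keelCoeff p I.1), map_smul, smul_eq_mul, mul_comm]

lemma keelMap_surjective (hn : 4 ≤ n) : Function.Surjective (keelMap n) := by
  refine LinearMap.dualMap_injective_iff.1 ((injective_iff_map_eq_zero _).2 fun γ hγ => ?_)
  have hc : (fun p => γ (Finsupp.single p 1)) = 0 :=
    eq_zero_of_keelComb_eq_zero hn fun S h1 h2 => by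
      rw [← dual_apply_keelMap_single γ ⟨S, h1, h2⟩, ← LinearMap.dualMap_apply, hγ]
      rfl
  exact Finsupp.lhom_ext' fun p => LinearMap.ext_ring (congrFun hc p)

end KeelMapSurjective

section KeelModDimension

variable {n : ℕ}

noncomputable def divisorValues (n : ℕ) :
    Module.Dual ℚ (BIdx n →₀ ℚ) →ₗ[ℚ] (Finset (Fin n) → ℚ) :=
  Function.ExtendByZero.linearMap ℚ (fun I : BIdx n => I.1) ∘ₗ
    (Finsupp.llift ℚ ℚ ℚ (BIdx n)).symm.toLinearMap

lemma divisorValues_apply_val (g : Module.Dual ℚ (BIdx n →₀ ℚ)) (I : BIdx n) :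
    divisorValues n g I.1 = g (Finsupp.single I 1) := by
  have hinj : Function.Injective fun I : BIdx n => I.1 := fun _ _ => Subtype.ext
  simp only [divisorValues, LinearMap.coe_comp, Function.comp_apply,
    Function.ExtendByZero.linearMap_apply]
  exact hinj.extend_apply _ _ I

lemma divisorValues_apply_of_not_mem (g : Module.Dual ℚ (BIdx n →₀ ℚ)) {S : Finset (Fin n)}
    (hS : ¬(2 ≤ #S ∧ #S ≤ n - 2)) : divisorValues n g S = 0 := by
  simp only [divisorValues, LinearMap.coe_comp, Function.comp_apply,
    Function.ExtendByZero.linearMap_apply]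
  exact Function.extend_apply' _ _ _ fun ⟨I, hI⟩ => hS (hI ▸ I.2)

lemma divisorValues_injective : Function.Injective (divisorValues n) := by
  refine (injective_iff_map_eq_zero _).2 fun g hg => ?_
  ext I
  exact (divisorValues_apply_val g I).symm.trans (congrFun hg I.1)

lemma divisorValues_compl {g : Module.Dual ℚ (BIdx n →₀ ℚ)}
    (hcompl : ∀ I : BIdx n, divisorValues n g I.1ᶜ = divisorValues n g I.1) (S : Finset (Fin n)) :
    divisorValues n g Sᶜ = divisorValues n g S := by
  by_cases hS : 2 ≤ #S ∧ #S ≤ n - 2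
  · exact hcompl ⟨S, hS⟩
  have hSc : ¬(2 ≤ #Sᶜ ∧ #Sᶜ ≤ n - 2) := by
    have := (card_le_univ S).trans_eq (Fintype.card_fin n)
    rw [card_compl, Fintype.card_fin]
    omega
  rw [divisorValues_apply_of_not_mem g hS, divisorValues_apply_of_not_mem g hSc]

lemma injective_walshTransform_divisorValues (hn : 4 ≤ n) :
    Function.Injective ((LinearMap.funLeft ℚ ℚ fun p : TIdx n => p.1.2) ∘ₗ walshTransform ∘ₗ
      divisorValues n ∘ₗ (keelSub n).dualAnnihilator.subtype) := by
  refine (injective_iff_map_eq_zero _).2 fun ⟨g, hg⟩ h0 => Subtype.ext (divisorValues_injective ?_)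
  obtain ⟨hcompl, hsep⟩ :=
    (keelSub_le_ker_iff g (divisorValues n g) fun I => (divisorValues_apply_val g I).symm).1
      fun x hx => (Submodule.mem_dualAnnihilator _).1 hg x hx
  rw [Submodule.coe_zero, map_zero]
  refine eq_zero_of_walshTransform_even_eq_zero (by simp only [Fintype.card_fin]; omega)
    (divisorValues_apply_of_not_mem g (by simp))
    (fun m => divisorValues_apply_of_not_mem g (by simp)) (divisorValues_compl hcompl) hsep
    fun B hB h4 => ?_
  have hBn : #B ≤ n := (card_le_univ B).trans_eq (Fintype.card_fin n)
  exact congrFun h0 ⟨(#B, B), hB, h4, hBn, rfl⟩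

lemma finrank_keelMod_le (hn : 4 ≤ n) :
    Module.finrank ℚ (KeelMod n) ≤ Fintype.card (TIdx n) := by
  rw [(Subspace.quotEquivAnnihilator (keelSub n)).finrank_eq,
    ← Module.finrank_fintype_fun_eq_card ℚ]
  exact LinearMap.finrank_le_finrank_of_injective (injective_walshTransform_divisorValues hn)

end KeelModDimension

/-- for n ≥ 4, the S_n-representation `A¹(M̄_{0,n}) ≅ H²(M̄_{0,n};ℚ)`
(presented à la Keel by boundary divisors and relations) is isomorphic to
`⊕_{a even, a ≥ 4} U_{a,n−a}` (i.e. its character is `∑_{a even, a ≥ 4} s_{(a)}s_{(n−a)}`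
with the convention `s_{(0)} = 1`); in particular it is a permutation representation of
`S_n`, namely the linearization of the S_n-set `TIdx n`.  The isomorphism is required to
be S_n-equivariant. -/
theorem chow_one_of_moduli_is_permutation_rep (n : ℕ) (hn : 4 ≤ n) :
    ∃ e : KeelMod n ≃ₗ[ℚ] (TIdx n →₀ ℚ),
      ∀ (σ : Equiv.Perm (Fin n)) (x : BIdx n →₀ ℚ),
        e ((keelSub n).mkQ (keelRelabel n σ x)) =
          Finsupp.mapDomain (permTIdx n σ) (e ((keelSub n).mkQ x)) := by
  let f := (keelSub n).liftQ (keelMap n) keelSub_le_ker_keelMap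
  have hsurj : Function.Surjective f := by
    rw [← LinearMap.range_eq_top, Submodule.range_liftQ, LinearMap.range_eq_top]
    exact keelMap_surjective hn
  have hrank : Module.finrank ℚ (KeelMod n) = Module.finrank ℚ (TIdx n →₀ ℚ) :=
    le_antisymm ((finrank_keelMod_le hn).trans_eq (Module.finrank_finsupp_self ℚ).symm)
      (LinearMap.finrank_le_finrank_of_surjective hsurj)
  refine ⟨.ofBijective f ⟨(LinearMap.injective_iff_surjective_of_finrank_eq_finrank hrank).2 hsurj,
    hsurj⟩, fun σ x => keelMap_keelRelabel σ x⟩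
end

section
/- The map on weighted rooted trees with n inputs that replaces the weight w(v) of each vertex v by val(v) − 3 − w(v) if v is the root, and by val(v) − 2 − w(v) otherwise, is a well-defined bijection from the set of weighted rooted trees with n inputs and weight k onto the set of weighted rooted trees with n inputs and weight n − 2 − k. -/
/-! ## Weighted rooted trees
A rooted tree with `n` inputs (labeled by `Fin n`), with one output leg at the root `v₀`,
satisfying `val(v₀) ≥ 3` and `val(v) ≥ 4` for every other vertex, is encoded by the
laminar family `F` of the sets `D_T(v) ⊆ Fin n` of inputs lying below the non-root
vertices `v`.  Each such set has cardinality ≥ 3; the children of a non-root vertex `v`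
are the maximal members of `F` properly contained in `D_T(v)` together with the inputs of
`D_T(v)` contained in none of them, and `val(v) ≥ 4` means that `v` has at least 3
children; similarly the root has at least 2 children.  A weighted rooted tree carries in
addition a weight `w(v₀)` with `0 ≤ w(v₀) ≤ val(v₀) − 3` and weights `w(v)` with
`1 ≤ w(v) ≤ val(v) − 3` at the other vertices; its total weight is `∑ w(v)`. -/

open Finset

/-- Raw data of a weighted rooted tree with `n` inputs: the laminar family of the sets
of inputs below the non-root vertices, the weight of the root, and the weight function
on the non-root vertices. -/
abbrev RawTree (n : ℕ) :=
  Finset (Finset (Fin n)) × ℕ × (Finset (Fin n) → ℕ)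

/-- `x = (F, w₀, w)` encodes a weighted rooted tree with `n` inputs: `F` is laminar,
all members of `F` have ≥ 3 elements, every non-root vertex has ≥ 3 children
(`val(v) ≥ 4`), the root has ≥ 2 children (`val(v₀) ≥ 3`), the root weight satisfies
`0 ≤ w₀ ≤ val(v₀) − 3`, the other weights satisfy `1 ≤ w(v) ≤ val(v) − 3`, and `w` is
normalized to vanish outside `F`. -/
def IsWTree (n : ℕ) (x : RawTree n) : Prop :=
  (∀ S ∈ x.1, ∀ T ∈ x.1, S ⊆ T ∨ T ⊆ S ∨ Disjoint S T) ∧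
  (∀ S ∈ x.1, 3 ≤ S.card) ∧
  (∀ S ∈ x.1, 3 ≤ childCount n x.1 S) ∧
  2 ≤ rootChildCount n x.1 ∧
  x.2.1 + 2 ≤ rootChildCount n x.1 ∧
  (∀ S ∈ x.1, 1 ≤ x.2.2 S ∧ x.2.2 S + 2 ≤ childCount n x.1 S) ∧
  (∀ S, S ∉ x.1 → x.2.2 S = 0)

/-- The total weight of a weighted rooted tree. -/
def wt (n : ℕ) (x : RawTree n) : ℕ := x.2.1 + ∑ S ∈ x.1, x.2.2 S

/-- The action of `S_n` on weighted rooted trees by permutation of the inputs. -/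
def permRaw (n : ℕ) (σ : Equiv.Perm (Fin n)) (x : RawTree n) : RawTree n :=
  (x.1.image (fun S => S.image σ), x.2.1, fun S => x.2.2 (S.image ⇑(σ⁻¹)))

/-- The duality operation on weighted rooted trees: the weight `w(v)` of a vertex is
replaced by `val(v) − 3 − w(v)` at the root and by `val(v) − 2 − w(v)` at the other
vertices (in terms of the numbers of children: `rootChildCount − 2 − w₀` at the root and
`childCount − 1 − w(v)` elsewhere). -/
def dualTree (n : ℕ) (x : RawTree n) : RawTree n :=
  (x.1, rootChildCount n x.1 - 2 - x.2.1,
    fun S => if S ∈ x.1 then childCount n x.1 S - 1 - x.2.2 S else 0)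

section Helpers
variable {n : ℕ} {F : Finset (Finset (Fin n))}
variable (hlam : ∀ S ∈ F, ∀ T ∈ F, S ⊆ T ∨ T ⊆ S ∨ Disjoint S T)
variable (hne : ∀ S ∈ F, S.Nonempty)

include hlam hne in
lemma card_family_eq :
    F.card = (rootChildSets n F).card + ∑ S ∈ F, (childSets n F S).card := by
  have hdisj : (F : Set (Finset (Fin n))).PairwiseDisjoint (childSets n F) := by
    intro S hS S' hS' hSS'
    simp only [Finset.disjoint_left]
    intro T hT hT'
    simp only [childSets, mem_filter] at hT hT'
    obtain ⟨hTF, hTS, hTmax⟩ := hT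
    obtain ⟨_, hTS', hTmax'⟩ := hT'
    have hTne := hne T hTF
    rcases hlam S hS S' hS' with h | h | h
    · rcases eq_or_lt_of_le h with rfl | h
      · exact hSS' rfl
      · exact hTmax' S hS ⟨hTS, h⟩
    · rcases eq_or_lt_of_le h with rfl | h
      · exact hSS' rfl
      · exact hTmax S' hS' ⟨hTS', h⟩
    · obtain ⟨a, ha⟩ := hTne
      exact Finset.disjoint_left.1 h (hTS.subset ha) (hTS'.subset ha)
  have hcover : rootChildSets n F ∪ F.biUnion (childSets n F) = F := by
    apply Finset.Subset.antisymm
    · apply Finset.union_subset (filter_subset _ _)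
      exact Finset.biUnion_subset.2 fun S _ => filter_subset _ _
    · intro T hT
      by_cases hmax : ∀ U ∈ F, ¬ T ⊂ U
      · exact Finset.mem_union_left _ (mem_filter.2 ⟨hT, hmax⟩)
      · push_neg at hmax
        obtain ⟨U, hU, hTU⟩ := hmax
        have hA : (F.filter fun V => T ⊂ V).Nonempty :=
          ⟨U, mem_filter.2 ⟨hU, hTU⟩⟩
        obtain ⟨S, hS, hSmin⟩ := Finset.exists_min_image _ Finset.card hA
        rw [mem_filter] at hS
        refine Finset.mem_union_right _ (Finset.mem_biUnion.2 ⟨S, hS.1, ?_⟩)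
        refine mem_filter.2 ⟨hT, hS.2, fun V hV ⟨hTV, hVS⟩ => ?_⟩
        exact absurd (hSmin V (mem_filter.2 ⟨hV, hTV⟩)) (not_le.2 (Finset.card_lt_card hVS))
  have hdisj2 : Disjoint (rootChildSets n F) (F.biUnion (childSets n F)) := by
    simp only [Finset.disjoint_left]
    intro T hT hT'
    obtain ⟨S, hS, hTS⟩ := Finset.mem_biUnion.1 hT'
    simp only [rootChildSets, childSets, mem_filter] at hT hTS
    exact hT.2 S hS hTS.2.1
  calc F.card = (rootChildSets n F ∪ F.biUnion (childSets n F)).card := by rw [hcover]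
    _ = _ := by rw [Finset.card_union_of_disjoint hdisj2, Finset.card_biUnion hdisj]

include hlam in
lemma card_inputs_eq :
    n = (rootFree n F).card + ∑ S ∈ F, (freeIn n F S).card := by
  have hdisj : (F : Set (Finset (Fin n))).PairwiseDisjoint (freeIn n F) := by
    intro S hS S' hS' hSS'
    simp only [Finset.disjoint_left]
    intro x hx hx'
    simp only [freeIn, mem_filter] at hx hx'
    rcases hlam S hS S' hS' with h | h | h
    · rcases eq_or_lt_of_le h with rfl | h
      · exact hSS' rfl
      · exact hx'.2 S hS h hx.1
    · rcases eq_or_lt_of_le h with rfl | h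
      · exact hSS' rfl
      · exact hx.2 S' hS' h hx'.1
    · exact Finset.disjoint_left.1 h hx.1 hx'.1
  have hcover : rootFree n F ∪ F.biUnion (freeIn n F) = Finset.univ := by
    apply Finset.Subset.antisymm (Finset.subset_univ _)
    intro x _
    by_cases hout : ∀ T ∈ F, x ∉ T
    · exact Finset.mem_union_left _ (mem_filter.2 ⟨Finset.mem_univ _, hout⟩)
    · push_neg at hout
      obtain ⟨U, hU, hxU⟩ := hout
      have hA : (F.filter fun V => x ∈ V).Nonempty := ⟨U, mem_filter.2 ⟨hU, hxU⟩⟩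
      obtain ⟨S, hS, hSmin⟩ := Finset.exists_min_image _ Finset.card hA
      rw [mem_filter] at hS
      refine Finset.mem_union_right _ (Finset.mem_biUnion.2 ⟨S, hS.1, ?_⟩)
      refine mem_filter.2 ⟨hS.2, fun T hT hTS hxT => ?_⟩
      exact absurd (hSmin T (mem_filter.2 ⟨hT, hxT⟩)) (not_le.2 (Finset.card_lt_card hTS))
  have hdisj2 : Disjoint (rootFree n F) (F.biUnion (freeIn n F)) := by
    simp only [Finset.disjoint_left]
    intro x hx hx'
    obtain ⟨S, hS, hxS⟩ := Finset.mem_biUnion.1 hx'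
    simp only [rootFree, freeIn, mem_filter] at hx hxS
    exact hx.2 S hS hxS.1
  calc n = (Finset.univ : Finset (Fin n)).card := by simp
    _ = _ := by
      rw [← hcover, Finset.card_union_of_disjoint hdisj2, Finset.card_biUnion hdisj]

include hlam hne in
lemma flag_count :
    n + F.card = rootChildCount n F + ∑ S ∈ F, childCount n F S := by
  have h1 := card_family_eq hlam hne
  have h2 := card_inputs_eq hlam
  simp only [rootChildCount, childCount, Finset.sum_add_distrib]
  omega

end Helpers

section Main
variable {n : ℕ} {x : RawTree n}

lemma isWTree_dual (hx : IsWTree n x) : IsWTree n (dualTree n x) := by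
  obtain ⟨h1, h2, h3, h4, h5, h6, h7⟩ := hx
  refine ⟨h1, h2, h3, h4, ?_, ?_, ?_⟩
  · show rootChildCount n x.1 - 2 - x.2.1 + 2 ≤ rootChildCount n x.1
    omega
  · intro S hS
    show 1 ≤ (if S ∈ x.1 then _ else 0) ∧ (if S ∈ x.1 then _ else 0) + 2 ≤ childCount n x.1 S
    have hS' : S ∈ x.1 := hS
    simp only [if_pos hS']
    have := h6 S hS'
    omega
  · intro S hS
    show (if S ∈ x.1 then _ else 0) = 0
    exact if_neg (fun h : S ∈ x.1 => hS h)

lemma wt_dual (hx : IsWTree n x) : wt n (dualTree n x) = n - 2 - wt n x := by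
  obtain ⟨h1, h2, h3, h4, h5, h6, h7⟩ := hx
  have hne : ∀ S ∈ x.1, S.Nonempty := fun S hS =>
    Finset.card_pos.1 (by have := h2 S hS; omega)
  have hflag := flag_count h1 hne
  have hwt : wt n (dualTree n x) =
      (rootChildCount n x.1 - 2 - x.2.1) +
        ∑ S ∈ x.1, (childCount n x.1 S - 1 - x.2.2 S) := by
    unfold wt dualTree
    simp only
    congr 1
    exact Finset.sum_congr rfl fun S hS => if_pos hS
  have key : (∑ S ∈ x.1, (childCount n x.1 S - 1 - x.2.2 S)) +
      (x.1.card + ∑ S ∈ x.1, x.2.2 S) = ∑ S ∈ x.1, childCount n x.1 S := by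
    rw [Finset.card_eq_sum_ones, ← Finset.sum_add_distrib, ← Finset.sum_add_distrib]
    refine Finset.sum_congr rfl fun S hS => ?_
    have := h6 S hS
    omega
  rw [hwt]
  unfold wt
  omega

lemma dual_dual (hx : IsWTree n x) : dualTree n (dualTree n x) = x := by
  obtain ⟨h1, h2, h3, h4, h5, h6, h7⟩ := hx
  have hfst : (dualTree n x).1 = x.1 := rfl
  refine Prod.ext rfl (Prod.ext ?_ ?_)
  · show rootChildCount n x.1 - 2 - (rootChildCount n x.1 - 2 - x.2.1) = x.2.1
    omega
  · funext S
    show (if S ∈ x.1 then childCount n x.1 S - 1 -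
        (if S ∈ x.1 then childCount n x.1 S - 1 - x.2.2 S else 0) else 0) = x.2.2 S
    by_cases hS : S ∈ x.1
    · rw [if_pos hS, if_pos hS]
      have := h6 S hS
      omega
    · rw [if_neg hS, (h7 S hS)]

end Main


/-- the duality map is a well-defined bijection from the set of weighted
rooted trees with n inputs and weight k onto the set of weighted rooted trees with n
inputs and weight n − 2 − k. -/
theorem dual_tree_bijection (n k : ℕ) (hk : k ≤ n - 2) :
    Set.BijOn (dualTree n)
      {x : RawTree n | IsWTree n x ∧ wt n x = k}
      {x : RawTree n | IsWTree n x ∧ wt n x = n - 2 - k} := by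
  have hwtle : ∀ x : RawTree n, IsWTree n x → wt n x ≤ n - 2 := by
    intro x hx
    have h := wt_dual (isWTree_dual hx)
    rw [dual_dual hx] at h
    have h2 := wt_dual hx
    omega
  refine Set.InvOn.bijOn ⟨fun x hx => dual_dual hx.1, fun y hy => dual_dual hy.1⟩
    (fun x hx => ⟨isWTree_dual hx.1, by rw [wt_dual hx.1, hx.2]⟩)
    (fun y hy => ⟨isWTree_dual hy.1, ?_⟩)
  rw [wt_dual hy.1, hy.2]
  omega
end

section
/- For n ≥ 4 and the virtual ℚ-representation K_0(M̄_{0,n})_{cusp} of S_n defined by the recursion K_0(M̄_{0,n})_{cusp} = K_0(M̄_{0,n}) − U_n − ∑_{i=4}^{n−1} U_{n−i}·K_0(M̄_{0,i})_{cusp}, the following hold: K_0(M̄_{0,4})_{cusp} ≅ U_4 (the trivial representation of S_4), K_0(M̄_{0,5})_{cusp} ≅ U_5, and K_0(M̄_{0,6})_{cusp} ≅ U_6^{⊕2} ⊕ U_{3,3}^{S_2}, where U_{3,3}^{S_2} = Ind_{(S_3 × S_3)⋊S_2}^{S_6}(triv). -/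
/-! STATEMENT 19: the K-theoretic cuspidal blocks of `M̄_{0,n}` for `n = 4, 5, 6`.
Characters of (virtual) S_n-representations live in the ring of symmetric functions
`Λ ⊗ ℚ = ℚ[p₁, p₂, …]`, modeled as `MvPolynomial ℕ ℚ` with `X n` the power sum `p_n`.
The complete homogeneous symmetric functions `h k` (i.e. `s_{(k)}`, the characters of
the trivial representations `U_k`) are characterized by Newton's identities, and the
plethysm is given with its defining properties as hypotheses.  The Schur functions
needed are expressed by Jacobi–Trudi: `s_{(4,1)} = h₄h₁ − h₅`, `s_{(4,2)} = h₄h₂ − h₅h₁`,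
`s_{(5,1)} = h₅h₁ − h₆`.  As an S_n-representation, `K₀(M̄_{0,n}) ≅ ⊕_k A^k(M̄_{0,n})`,
whose characters for `n ≤ 6` are recorded in the definitions `K04, K05, K06` below.
`ch(U_{n−i}·V) = h_{n−i}·ch(V)`, and `ch(U_{3,3}^{S₂}) = s_{(2)} ∘ s_{(3)} = pleth (h 2) (h 3)`. -/

open MvPolynomial

/-- `ch(K₀(M̄_{0,4})) = ch(A⁰ ⊕ A¹) = 2 s_{(4)}`. -/
noncomputable def K04 (h : ℕ → MvPolynomial ℕ ℚ) : MvPolynomial ℕ ℚ := h 4 + h 4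

/-- `ch(K₀(M̄_{0,5})) = s_{(5)} + (s_{(5)} + s_{(4,1)}) + s_{(5)}`. -/
noncomputable def K05 (h : ℕ → MvPolynomial ℕ ℚ) : MvPolynomial ℕ ℚ :=
  h 5 + (h 5 + (h 4 * h 1 - h 5)) + h 5

/-- `ch(K₀(M̄_{0,6})) = s_{(6)} + 2(2 s_{(6)} + s_{(4,2)} + s_{(5,1)}) + s_{(6)}`. -/
noncomputable def K06 (h : ℕ → MvPolynomial ℕ ℚ) : MvPolynomial ℕ ℚ :=
  h 6 + 2 * (2 * h 6 + (h 4 * h 2 - h 5 * h 1) + (h 5 * h 1 - h 6)) + h 6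

/-- `cusp₄ = K₀(M̄_{0,4}) − U₄` (the sum `∑_{i=4}^{3}` being empty). -/
noncomputable def cusp4 (h : ℕ → MvPolynomial ℕ ℚ) : MvPolynomial ℕ ℚ := K04 h - h 4

/-- `cusp₅ = K₀(M̄_{0,5}) − U₅ − U₁·cusp₄`. -/
noncomputable def cusp5 (h : ℕ → MvPolynomial ℕ ℚ) : MvPolynomial ℕ ℚ :=
  K05 h - h 5 - h 1 * cusp4 h

/-- `cusp₆ = K₀(M̄_{0,6}) − U₆ − (U₂·cusp₄ + U₁·cusp₅)`. -/
noncomputable def cusp6 (h : ℕ → MvPolynomial ℕ ℚ) : MvPolynomial ℕ ℚ :=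
  K06 h - h 6 - (h 2 * cusp4 h + h 1 * cusp5 h)

theorem cuspidal_blocks_small_n
    (pleth : MvPolynomial ℕ ℚ → MvPolynomial ℕ ℚ → MvPolynomial ℕ ℚ)
    (pleth_add_left : ∀ f g h, pleth (f + g) h = pleth f h + pleth g h)
    (pleth_mul_left : ∀ f g h, pleth (f * g) h = pleth f h * pleth g h)
    (pleth_C_left : ∀ (c : ℚ) (h : MvPolynomial ℕ ℚ), pleth (C c) h = C c)
    (pleth_p_add : ∀ (n : ℕ) (f g : MvPolynomial ℕ ℚ),
      pleth (X n) (f + g) = pleth (X n) f + pleth (X n) g)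
    (pleth_p_mul : ∀ (n : ℕ) (f g : MvPolynomial ℕ ℚ),
      pleth (X n) (f * g) = pleth (X n) f * pleth (X n) g)
    (pleth_p_C : ∀ (n : ℕ) (c : ℚ), pleth (X n) (C c) = C c)
    (pleth_p_p : ∀ n m : ℕ, pleth (X n) (X m) = X (n * m))
    (h : ℕ → MvPolynomial ℕ ℚ)
    (hh0 : h 0 = 1)
    (hNewton : ∀ m : ℕ, ((m + 1 : ℕ) : ℚ) • h (m + 1)
      = ∑ i ∈ Finset.range (m + 1), X (i + 1) * h (m - i)) :
    cusp4 h = h 4 ∧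
    cusp5 h = h 5 ∧
    cusp6 h = 2 * h 6 + pleth (h 2) (h 3) := by

  -- Newton's identities in multiplied form
  have hsm : ∀ m : ℕ, ((m + 1 : ℕ) : MvPolynomial ℕ ℚ) * h (m + 1)
      = ∑ i ∈ Finset.range (m + 1), X (i + 1) * h (m - i) := by
    intro m
    have := hNewton m
    rwa [Nat.cast_smul_eq_nsmul, nsmul_eq_mul] at this
  have N0 := hsm 0
  have N1 := hsm 1
  have N2 := hsm 2
  have N3 := hsm 3
  have N4 := hsm 4
  have N5 := hsm 5
  simp only [Finset.sum_range_succ, Finset.sum_range_zero, zero_add] at N0 N1 N2 N3 N4 N5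
  norm_num [hh0] at N0 N1 N2 N3 N4 N5
  have E2 : (2 : MvPolynomial ℕ ℚ) * h 2 = X 1 * X 1 + X 2 := by
    linear_combination N1 + X 1 * N0
  have E3 : (6 : MvPolynomial ℕ ℚ) * h 3
      = X 1 * X 1 * X 1 + 3 * (X 1 * X 2) + 2 * X 3 := by
    linear_combination 2 * N2 + X 1 * E2 + 2 * X 2 * N0
  have E4 : (24 : MvPolynomial ℕ ℚ) * h 4
      = X 1 ^ 4 + 6 * (X 1 ^ 2 * X 2) + 3 * X 2 ^ 2 + 8 * (X 1 * X 3) + 6 * X 4 := by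
    linear_combination 6 * N3 + X 1 * E3 + 3 * X 2 * E2 + 6 * X 3 * N0
  have E5 : (120 : MvPolynomial ℕ ℚ) * h 5
      = X 1 ^ 5 + 10 * (X 1 ^ 3 * X 2) + 15 * (X 1 * X 2 ^ 2) + 20 * (X 1 ^ 2 * X 3)
        + 20 * (X 2 * X 3) + 30 * (X 1 * X 4) + 24 * X 5 := by
    linear_combination 24 * N4 + X 1 * E4 + 4 * X 2 * E3 + 12 * X 3 * E2 + 24 * X 4 * N0
  have E6 : (720 : MvPolynomial ℕ ℚ) * h 6
      = X 1 ^ 6 + 15 * (X 1 ^ 4 * X 2) + 45 * (X 1 ^ 2 * X 2 ^ 2) + 15 * X 2 ^ 3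
        + 40 * (X 1 ^ 3 * X 3) + 120 * (X 1 * X 2 * X 3) + 40 * X 3 ^ 2
        + 90 * (X 1 ^ 2 * X 4) + 90 * (X 2 * X 4) + 144 * (X 1 * X 5) + 120 * X 6 := by
    linear_combination 120 * N5 + X 1 * E5 + 5 * X 2 * E4 + 20 * X 3 * E3 + 60 * X 4 * E2
      + 120 * X 5 * N0
  -- closed C-forms needed for the plethysm
  have c2 : (2 : MvPolynomial ℕ ℚ) = C (2 : ℚ) := by rw [map_ofNat]
  have c3 : (3 : MvPolynomial ℕ ℚ) = C (3 : ℚ) := by rw [map_ofNat]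
  have c6 : (6 : MvPolynomial ℕ ℚ) = C (6 : ℚ) := by rw [map_ofNat]
  have eh2C : h 2 = C (1/2 : ℚ) * (X 1 * X 1 + X 2) := by
    have : h 2 = C (1/2 : ℚ) * ((2 : MvPolynomial ℕ ℚ) * h 2) := by
      rw [c2, ← mul_assoc, ← map_mul]; norm_num
    rw [this, E2]
  have eh3C : h 3 = C (1/6 : ℚ) * (X 1 * X 1 * X 1 + C (3:ℚ) * (X 1 * X 2) + C (2:ℚ) * X 3) := by
    have : h 3 = C (1/6 : ℚ) * ((6 : MvPolynomial ℕ ℚ) * h 3) := by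
      rw [c6, ← mul_assoc, ← map_mul]; norm_num
    rw [this, E3, ← c2, ← c3]
  have hA : pleth (X 1) (h 3) = h 3 := by
    conv_lhs => rw [eh3C]
    simp only [pleth_p_mul, pleth_p_add, pleth_p_C, pleth_p_p]
    linear_combination -eh3C
  have hB : pleth (X 2) (h 3)
      = C (1/6 : ℚ) * (X 2 * X 2 * X 2 + C (3:ℚ) * (X 2 * X 4) + C (2:ℚ) * X 6) := by
    conv_lhs => rw [eh3C]
    simp only [pleth_p_mul, pleth_p_add, pleth_p_C, pleth_p_p]
  have SB : (6 : MvPolynomial ℕ ℚ) * pleth (X 2) (h 3)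
      = X 2 * X 2 * X 2 + 3 * (X 2 * X 4) + 2 * X 6 := by
    have h61 : (6 : MvPolynomial ℕ ℚ) * C (1/6 : ℚ) = 1 := by
      rw [c6, ← map_mul]; norm_num
    rw [hB, ← mul_assoc, h61, one_mul, ← c2, ← c3]
  have hP : (2 : MvPolynomial ℕ ℚ) * pleth (h 2) (h 3)
      = h 3 * h 3 + pleth (X 2) (h 3) := by
    have h21 : (2 : MvPolynomial ℕ ℚ) * C (1/2 : ℚ) = 1 := by
      rw [c2, ← map_mul]; norm_num
    conv_lhs => rw [eh2C]
    rw [pleth_mul_left, pleth_C_left, pleth_add_left, pleth_mul_left, hA, ← mul_assoc, h21,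
      one_mul]
  have h720 : (720 : MvPolynomial ℕ ℚ) ≠ 0 := by
    norm_num
  refine ⟨?_, ?_, ?_⟩
  · unfold cusp4 K04; ring
  · unfold cusp5 cusp4 K05 K04; ring
  · apply mul_left_cancel₀ h720
    unfold cusp6 cusp5 cusp4 K06 K05 K04
    linear_combination E6 + 360 * h 4 * E2 + 15 * (X 1 * X 1 + X 2) * E4 - 6 * h 1 * E5
      - 6 * (X 1 ^ 5 + 10 * (X 1 ^ 3 * X 2) + 15 * (X 1 * X 2 ^ 2) + 20 * (X 1 ^ 2 * X 3)
        + 20 * (X 2 * X 3) + 30 * (X 1 * X 4) + 24 * X 5) * N0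
      - 10 * (6 * h 3 + (X 1 * X 1 * X 1 + 3 * (X 1 * X 2) + 2 * X 3)) * E3
      - 60 * SB - 360 * hP
end
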